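/- arXiv:1907.11600 — 8 statements merged into one kernel-verified Lean document; each statement's English description precedes it below -/
import Mathlib

section
/- For every integer k and every multigraph G, there exists a partition (A,B) of the vertex set of G with A nonempty such that the number of edges between A and B is at most 2k, and the induced subgraph G[A] is k-edge-connected or has only one vertex. -/
/-!
Take a vertex set `B` that is inclusion-minimal among the nonempty sets with at most `2k`
crossing edges (`V` itself has none). If `G[B]` were not `k`-edge-connected, a set `D` of
fewer than `k` edges would split `B` into `S` and `B \ S` with no other edges between them.
Writing `δ(X)` for the crossing edges of `X`, every edge of `δ(S) ∪ δ(B \ S)` is in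
`δ(B) ∪ D`, and only edges of `D` cross both, so `|δ(S)| + |δ(B \ S)| ≤ |δ(B)| + 2|D| < 4k`:
one of the two sides has at most `2k` crossing edges, against the minimality of `B`.
-/

/-- Adjacency in a multigraph given by an endpoint map, using only edges in `F`. -/
def MGAdj {V E : Type} (ends : E → Sym2 V) (F : Set E) (u v : V) : Prop :=
  ∃ e ∈ F, ends e = s(u, v)

/-- The vertex set `A` is connected using only edges in `F` (with all intermediate
vertices in `A`). -/
def MGConnOn {V E : Type} (ends : E → Sym2 V) (A : Set V) (F : Set E) : Prop :=
  ∀ u ∈ A, ∀ v ∈ A,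
    Relation.ReflTransGen (fun x y => x ∈ A ∧ y ∈ A ∧ MGAdj ends F x y) u v

/-- The induced multigraph on `A` is `k`-edge-connected: after deleting any set of
fewer than `k` edges, the induced graph on `A` remains connected. -/
def MGEdgeConnOn {V E : Type} (ends : E → Sym2 V) (A : Set V) (k : ℕ) : Prop :=
  ∀ D : Set E, Nat.card D < k →
    MGConnOn ends A {e | (∀ x ∈ ends e, x ∈ A) ∧ e ∉ D}

def MGCut {V E : Type} (ends : E → Sym2 V) (A : Set V) : Set E :=
  {e | (∃ x ∈ ends e, x ∈ A) ∧ (∃ y ∈ ends e, y ∉ A)}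

def MGSeparates {V E : Type} (ends : E → Sym2 V) (D : Set E) (S A : Set V) : Prop :=
  ∀ e ∉ D, ∀ x y, ends e = s(x, y) → x ∈ S → y ∈ A → y ∈ S

section
variable {V E : Type} (ends : E → Sym2 V)

lemma mem_MGCut_iff {A : Set V} {e : E} {x y : V} (h : ends e = s(x, y)) :
    e ∈ MGCut ends A ↔ (x ∈ A ↔ y ∉ A) := by
  simp only [MGCut, Set.mem_ofPred_eq, h, Sym2.mem_iff, exists_eq_or_imp, exists_eq_left]
  tauto

lemma MGCut_univ : MGCut ends (Set.univ : Set V) = ∅ := by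
  simp [MGCut]

variable {ends}

lemma MGCut_union_MGCut_diff_subset {D : Set E} {S A : Set V} (hSA : S ⊆ A)
    (hsep : MGSeparates ends D S A) :
    MGCut ends S ∪ MGCut ends (A \ S) ⊆ MGCut ends A ∪ D := by
  intro e he
  by_contra hnot
  have heD : e ∉ D := fun h => hnot (Or.inr h)
  induction h : ends e using Sym2.inductionOn with
  | hf x y =>
    have hxy := hsep e heD x y h
    have hyx := hsep e heD y x (h.trans (Sym2.eq_swap))
    have hx := @hSA x
    have hy := @hSA y
    simp only [Set.mem_union, mem_MGCut_iff ends h, Set.mem_sdiff] at he hnot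
    tauto

lemma MGCut_inter_MGCut_diff_subset {D : Set E} {S A : Set V}
    (hsep : MGSeparates ends D S A) :
    MGCut ends S ∩ MGCut ends (A \ S) ⊆ D := by
  intro e he
  by_contra heD
  induction h : ends e using Sym2.inductionOn with
  | hf x y =>
    have hxy := hsep e heD x y h
    have hyx := hsep e heD y x (h.trans (Sym2.eq_swap))
    simp only [Set.mem_inter_iff, mem_MGCut_iff ends h, Set.mem_sdiff] at he
    tauto

lemma ncard_MGCut_add_ncard_MGCut_diff_le [Finite E] {D : Set E} {S A : Set V} (hSA : S ⊆ A)
    (hsep : MGSeparates ends D S A) :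
    (MGCut ends S).ncard + (MGCut ends (A \ S)).ncard ≤ (MGCut ends A).ncard + 2 * D.ncard :=
  calc (MGCut ends S).ncard + (MGCut ends (A \ S)).ncard
      = (MGCut ends S ∪ MGCut ends (A \ S)).ncard + (MGCut ends S ∩ MGCut ends (A \ S)).ncard :=
        (Set.ncard_union_add_ncard_inter _ _ (Set.toFinite _) (Set.toFinite _)).symm
    _ ≤ (MGCut ends A ∪ D).ncard + D.ncard :=
        add_le_add (Set.ncard_le_ncard (MGCut_union_MGCut_diff_subset hSA hsep))
          (Set.ncard_le_ncard (MGCut_inter_MGCut_diff_subset hsep))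
    _ ≤ (MGCut ends A).ncard + 2 * D.ncard := by
        linarith [Set.ncard_union_le (MGCut ends A) D]

/-- `S` is the vertex set of a component of `G[A]` minus `D`. -/
lemma exists_MGSeparates_of_not_MGEdgeConnOn {A : Set V} {k : ℕ}
    (h : ¬ MGEdgeConnOn ends A k) :
    ∃ D : Set E, ∃ S : Set V, D.ncard < k ∧ S ⊆ A ∧ S.Nonempty ∧ (A \ S).Nonempty ∧
      MGSeparates ends D S A := by
  simp only [MGEdgeConnOn, MGConnOn, not_forall, exists_prop] at h
  obtain ⟨D, hD, u, hu, v, hv, huv⟩ := h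
  refine ⟨D, {x | x ∈ A ∧ Relation.ReflTransGen _ u x}, by rwa [← Nat.card_coe_set_eq],
    fun x hx => hx.1, ⟨u, hu, .refl⟩, ⟨v, hv, fun hv' => huv hv'.2⟩, ?_⟩
  rintro e heD x y hxy ⟨hx, hux⟩ hy
  refine ⟨hy, hux.tail ⟨hx, hy, e, ⟨fun z hz => ?_, heD⟩, hxy⟩⟩
  rw [hxy, Sym2.mem_iff] at hz
  rcases hz with rfl | rfl <;> assumption

/-- If not, fewer than `k` edges separate `B` into two proper nonempty parts whose cuts
add up to less than `4k`, so one of the parts contradicts minimality. -/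
lemma MGEdgeConnOn_of_minimal [Finite E] {k : ℕ} {B : Set V}
    (hB : Minimal (fun A => A.Nonempty ∧ (MGCut ends A).ncard ≤ 2 * k) B) :
    MGEdgeConnOn ends B k := by
  by_contra hconn
  obtain ⟨D, S, hD, hSB, hS, hBS, hsep⟩ := exists_MGSeparates_of_not_MGEdgeConnOn hconn
  have hsum := ncard_MGCut_add_ncard_MGCut_diff_le hSB hsep
  have hBcut := hB.prop.2
  have hssub : S ⊂ B := (Set.ssubset_iff_of_subset hSB).2 hBS
  have hdsub : B \ S ⊂ B := Set.sdiff_ssubset_left_iff.2 (by rwa [Set.inter_eq_right.2 hSB])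
  by_cases hcut : (MGCut ends S).ncard ≤ 2 * k
  · exact hB.not_lt ⟨hS, hcut⟩ hssub
  · exact hB.not_lt ⟨hBS, by omega⟩ hdsub

end

/-- for every `k` and every multigraph `G`, there is a cut `(A, Aᶜ)`
with `A` nonempty, at most `2k` crossing edges, and `G[A]` `k`-edge-connected or a
single vertex. -/
theorem stmt0 (k : ℕ) (V E : Type) [Fintype V] [Fintype E] [Nonempty V]
    (ends : E → Sym2 V) :
    ∃ A : Set V, A.Nonempty ∧
      Nat.card {e : E // (∃ x ∈ ends e, x ∈ A) ∧ (∃ y ∈ ends e, y ∉ A)} ≤ 2 * k ∧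
      (MGEdgeConnOn ends A k ∨ Nat.card A = 1) := by
  obtain ⟨B, hB⟩ := exists_minimal_of_wellFoundedLT
    (fun A : Set V => A.Nonempty ∧ (MGCut ends A).ncard ≤ 2 * k)
    ⟨Set.univ, Set.univ_nonempty, by simp [MGCut_univ]⟩
  exact ⟨B, hB.prop.1, (Nat.card_coe_set_eq (MGCut ends B)).trans_le hB.prop.2,
    .inl (MGEdgeConnOn_of_minimal hB)⟩
end

section
/- Let k be a positive integer and H a hypergraph all of whose hyperedges have size at most three. Then there is a cut (A,B) in H with A nonempty whose value is at most 3k (in particular its order is at most 3k) such that the induced hypergraph H[A] is k-edge-connected or has only one vertex. Here the value of (A,B) is defined as the sum over all hyperedges e meeting both A and B of |e ∩ A|. -/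
open scoped Classical

/-- Adjacency in a hypergraph with hyperedges given as multisets, using edges in `F`. -/
def HAdj {V E : Type} (edges : E → Multiset V) (F : Set E) (u v : V) : Prop :=
  ∃ e ∈ F, u ∈ edges e ∧ v ∈ edges e

/-- The vertex set `A` is connected using only hyperedges in `F`. -/
def HConnOn {V E : Type} (edges : E → Multiset V) (A : Set V) (F : Set E) : Prop :=
  ∀ u ∈ A, ∀ v ∈ A,
    Relation.ReflTransGen (fun x y => x ∈ A ∧ y ∈ A ∧ HAdj edges F x y) u v

/-- The induced hypergraph on `A` is `k`-edge-connected. -/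
def HEdgeConnOn {V E : Type} (edges : E → Multiset V) (A : Set V) (k : ℕ) : Prop :=
  ∀ D : Set E, Nat.card D < k →
    HConnOn edges A {e | (∀ x ∈ edges e, x ∈ A) ∧ e ∉ D}

/-- The value of the cut `(A, Aᶜ)`: the sum over all hyperedges meeting both sides
of the number of their vertices (with multiplicity) lying in `A`. -/
noncomputable def HCutVal {V E : Type} [Fintype E] (edges : E → Multiset V)
    (A : Set V) : ℕ :=
  ∑ e ∈ Finset.univ.filter
      (fun e : E => (∃ x ∈ edges e, x ∈ A) ∧ (∃ y ∈ edges e, y ∉ A)),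
    ((edges e).filter (· ∈ A)).card

/-!
Let `r` bound the sizes of the hyperedges (here `r = 3`) and take `A` inclusion-minimal among the
nonempty vertex sets of cut value at most `r k`; `V` itself has value `0`, so such sets exist.
If removing a set `D` of fewer than `k` hyperedges disconnected `H[A]`, split `A` along a
component into `A₁ ⊔ A₂`. A hyperedge outside `D` contributes to `val A₁ + val A₂` at most what it
contributes to `val A`, and one in `D` at most `r` more, so `val A₁ + val A₂ ≤ r k + r |D| ≤ 2 r k`.
Hence one of the two smaller parts also has value at most `r k`, contradicting minimality.
-/

namespace Hypergraph

variable {V E : Type} (edges : E → Multiset V)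

noncomputable def cutContribution (B : Set V) (e : E) : ℕ :=
  if (∃ x ∈ edges e, x ∈ B) ∧ (∃ y ∈ edges e, y ∉ B) then ((edges e).filter (· ∈ B)).card else 0

theorem HCutVal_eq_sum_cutContribution [Fintype E] (B : Set V) :
    HCutVal edges B = ∑ e, cutContribution edges B e := by
  rw [HCutVal, Finset.sum_filter]
  rfl

theorem HCutVal_univ [Fintype E] : HCutVal edges (Set.univ : Set V) = 0 := by
  rw [HCutVal_eq_sum_cutContribution]
  exact Finset.sum_eq_zero fun e _ => if_neg fun ⟨_, _, _, h⟩ => h (Set.mem_univ _)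

variable {edges}

theorem cutContribution_le_card_filter (B : Set V) (e : E) :
    cutContribution edges B e ≤ ((edges e).filter (· ∈ B)).card := by
  unfold cutContribution
  split_ifs <;> simp

theorem cutContribution_eq_zero_of_subset {B : Set V} {e : E} (h : ∀ x ∈ edges e, x ∈ B) :
    cutContribution edges B e = 0 :=
  if_neg fun ⟨_, y, hy, hyB⟩ => hyB (h y hy)

theorem cutContribution_eq_zero_of_forall_not_mem {B : Set V} {e : E}
    (h : ∀ x ∈ edges e, x ∉ B) : cutContribution edges B e = 0 :=
  if_neg fun ⟨⟨x, hx, hxB⟩, _⟩ => h x hx hxB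

theorem card_filter_add_card_filter_of_partition {A₁ A₂ A : Set V} (hdisj : Disjoint A₁ A₂)
    (hunion : A₁ ∪ A₂ = A) (m : Multiset V) :
    (m.filter (· ∈ A₁)).card + (m.filter (· ∈ A₂)).card = (m.filter (· ∈ A)).card := by
  have hboth : m.filter (fun x => x ∈ A₁ ∧ x ∈ A₂) = 0 :=
    Multiset.filter_eq_nil.mpr fun x _ hx => hdisj.notMem_of_mem_left hx.1 hx.2
  rw [← Multiset.card_add, Multiset.filter_add_filter, hboth, add_zero,
    Multiset.filter_congr (q := (· ∈ A)) fun x _ => by rw [← hunion, Set.mem_union]]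

variable {A₁ A₂ A : Set V}

theorem cutContribution_add_le_card_filter (hdisj : Disjoint A₁ A₂) (hunion : A₁ ∪ A₂ = A)
    (e : E) : cutContribution edges A₁ e + cutContribution edges A₂ e ≤
      ((edges e).filter (· ∈ A)).card := by
  rw [← card_filter_add_card_filter_of_partition hdisj hunion]
  exact add_le_add (cutContribution_le_card_filter A₁ e) (cutContribution_le_card_filter A₂ e)

theorem cutContribution_add_le_of_not_crossing (hdisj : Disjoint A₁ A₂) (hunion : A₁ ∪ A₂ = A)
    {e : E} (he : ¬((∀ x ∈ edges e, x ∈ A) ∧ (∃ x ∈ edges e, x ∈ A₁) ∧ ∃ y ∈ edges e, y ∈ A₂)) :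
    cutContribution edges A₁ e + cutContribution edges A₂ e ≤ cutContribution edges A e := by
  have hA₁ : A₁ ⊆ A := hunion ▸ Set.subset_union_left
  have hA₂ : A₂ ⊆ A := hunion ▸ Set.subset_union_right
  by_cases hinside : ∀ x ∈ edges e, x ∈ A
  · have hparts : ∀ x ∈ edges e, x ∈ A₁ ∨ x ∈ A₂ := fun x hx => by
      rw [← Set.mem_union, hunion]; exact hinside x hx
    by_cases h₁ : ∃ x ∈ edges e, x ∈ A₁
    · have h₂ : ∀ y ∈ edges e, y ∉ A₂ := fun y hy hyA₂ => he ⟨hinside, h₁, y, hy, hyA₂⟩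
      rw [cutContribution_eq_zero_of_subset fun x hx => (hparts x hx).resolve_right (h₂ x hx),
        cutContribution_eq_zero_of_forall_not_mem h₂]
      exact Nat.zero_le _
    · push Not at h₁
      rw [cutContribution_eq_zero_of_forall_not_mem h₁,
        cutContribution_eq_zero_of_subset fun x hx => (hparts x hx).resolve_left (h₁ x hx)]
      exact Nat.zero_le _
  · by_cases hmeets : ∃ x ∈ edges e, x ∈ A
    · push Not at hinside
      rw [show cutContribution edges A e = _ from if_pos ⟨hmeets, hinside⟩]
      exact cutContribution_add_le_card_filter hdisj hunion e
    · push Not at hmeets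
      rw [cutContribution_eq_zero_of_forall_not_mem fun x hx h => hmeets x hx (hA₁ h),
        cutContribution_eq_zero_of_forall_not_mem fun x hx h => hmeets x hx (hA₂ h)]
      exact Nat.zero_le _

theorem HCutVal_add_le_of_partition [Fintype E] (hdisj : Disjoint A₁ A₂) (hunion : A₁ ∪ A₂ = A)
    (D : Finset E) (hD : ∀ e, (∀ x ∈ edges e, x ∈ A) → (∃ x ∈ edges e, x ∈ A₁) →
      (∃ y ∈ edges e, y ∈ A₂) → e ∈ D) :
    HCutVal edges A₁ + HCutVal edges A₂ ≤ HCutVal edges A + ∑ e ∈ D, (edges e).card := by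
  simp only [HCutVal_eq_sum_cutContribution, ← Finset.sum_add_distrib]
  rw [← Finset.univ_inter D, ← Finset.sum_ite_mem, ← Finset.sum_add_distrib]
  refine Finset.sum_le_sum fun e _ => ?_
  split_ifs with heD
  · calc cutContribution edges A₁ e + cutContribution edges A₂ e
        ≤ ((edges e).filter (· ∈ A)).card := cutContribution_add_le_card_filter hdisj hunion e
      _ ≤ (edges e).card := Multiset.card_le_card (Multiset.filter_le _ _)
      _ ≤ cutContribution edges A e + (edges e).card := Nat.le_add_left _ _
  · exact cutContribution_add_le_of_not_crossing hdisj hunion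
      fun ⟨hin, h₁, h₂⟩ => heD (hD e hin h₁ h₂)

theorem exists_partition_of_not_HConnOn {F : Set E} (h : ¬HConnOn edges A F) :
    ∃ A₁ A₂ : Set V, A₁.Nonempty ∧ A₂.Nonempty ∧ Disjoint A₁ A₂ ∧ A₁ ∪ A₂ = A ∧
      ∀ e ∈ F, ∀ x ∈ edges e, ∀ y ∈ edges e, x ∈ A₁ → y ∉ A₂ := by
  simp only [HConnOn, not_forall] at h
  obtain ⟨u, hu, v, hv, huv⟩ := h
  set A₁ : Set V := {x | x ∈ A ∧ Relation.ReflTransGen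
    (fun x y => x ∈ A ∧ y ∈ A ∧ HAdj edges F x y) u x}
  have hA₁ : A₁ ⊆ A := fun x hx => hx.1
  refine ⟨A₁, A \ A₁, ⟨u, hu, .refl⟩, ⟨v, hv, fun hvA₁ => huv hvA₁.2⟩, Set.disjoint_sdiff_right,
    Set.union_sdiff_cancel hA₁, ?_⟩
  rintro e he x hx y hy hxA₁ ⟨hyA, hyA₁⟩
  exact hyA₁ ⟨hyA, hxA₁.2.tail ⟨hxA₁.1, hyA, e, he, hx, hy⟩⟩

theorem HEdgeConnOn_of_minimal [Fintype E] {r k : ℕ} (hsize : ∀ e, (edges e).card ≤ r)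
    (hA : Minimal (fun B : Set V => B.Nonempty ∧ HCutVal edges B ≤ r * k) A) :
    HEdgeConnOn edges A k := by
  intro D hD
  by_contra hconn
  obtain ⟨A₁, A₂, hA₁, hA₂, hdisj, hunion, hsep⟩ := exists_partition_of_not_HConnOn hconn
  have hsum := HCutVal_add_le_of_partition (edges := edges) hdisj hunion D.toFinset
    fun e hin ⟨x, hx, hxA₁⟩ ⟨y, hy, hyA₂⟩ => by
      by_contra heD
      exact hsep e ⟨hin, by simpa using heD⟩ x hx y hy hxA₁ hyA₂
  have hD_le : ∑ e ∈ D.toFinset, (edges e).card ≤ r * k :=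
    calc ∑ e ∈ D.toFinset, (edges e).card ≤ D.toFinset.card * r :=
          Finset.sum_le_card_nsmul _ _ _ fun e _ => hsize e
      _ ≤ r * k := by rw [mul_comm, ← Nat.card_eq_card_toFinset]; exact Nat.mul_le_mul_left r hD.le
  have h₁ : ¬HCutVal edges A₁ ≤ r * k := fun h => hA.not_prop_of_lt (hunion ▸
    Set.ssubset_union_left_iff.mpr fun h₂₁ => hA₂.ne_empty (hdisj.symm.eq_bot_of_le h₂₁)) ⟨hA₁, h⟩
  have h₂ : ¬HCutVal edges A₂ ≤ r * k := fun h => hA.not_prop_of_lt (hunion ▸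
    Set.ssubset_union_right_iff.mpr fun h₁₂ => hA₁.ne_empty (hdisj.eq_bot_of_le h₁₂)) ⟨hA₂, h⟩
  have hA_le := hA.prop.2
  omega

end Hypergraph

theorem stmt1_general (k : ℕ) (V E : Type) [Fintype V] [Fintype E] [Nonempty V]
    (edges : E → Multiset V)
    (hsize : ∀ e, (edges e).card ≤ 3) :
    ∃ A : Set V, A.Nonempty ∧ HCutVal edges A ≤ 3 * k ∧
      (HEdgeConnOn edges A k ∨ Nat.card A = 1) := by
  obtain ⟨A, hA⟩ := exists_minimal_of_wellFoundedLT
    (fun B : Set V => B.Nonempty ∧ HCutVal edges B ≤ 3 * k)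
    ⟨Set.univ, Set.univ_nonempty, Hypergraph.HCutVal_univ edges ▸ Nat.zero_le _⟩
  exact ⟨A, hA.prop.1, hA.prop.2, .inl (Hypergraph.HEdgeConnOn_of_minimal hsize hA)⟩

/-- in a hypergraph with hyperedges of size at most three, there is a
cut `(A, Aᶜ)` with `A` nonempty, value at most `3k`, such that `H[A]` is
`k`-edge-connected or has only one vertex. -/
theorem stmt1 (k : ℕ) (hk : 0 < k) (V E : Type) [Fintype V] [Fintype E] [Nonempty V]
    (edges : E → Multiset V)
    (hne : ∀ e, edges e ≠ 0) (hsize : ∀ e, (edges e).card ≤ 3) :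
    ∃ A : Set V, A.Nonempty ∧ HCutVal edges A ≤ 3 * k ∧
      (HEdgeConnOn edges A k ∨ Nat.card A = 1) :=
  stmt1_general k V E edges hsize
end

section
/- Every 3k-edge-connected hypergraph with hyperedges of size at most three is k-partition-connected; that is, for any partition of its vertex set into p nonempty parts, the number of hyperedges containing vertices in more than one part is at least k(p-1). -/
/-- A hypergraph is `k`-edge-connected: removing any fewer than `k` hyperedges
leaves it connected. -/
def HEdgeConn {V E : Type} (edges : E → Multiset V) (k : ℕ) : Prop :=
  ∀ D : Set E, Nat.card D < k →
    HConnOn edges Set.univ {e | e ∉ D}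

/-- A hypergraph is `k`-partition-connected: for every partition of the vertex set
into `p` nonempty parts, at least `k(p-1)` hyperedges meet more than one part. -/
def HPartConn {V E : Type} (edges : E → Multiset V) (k : ℕ) : Prop :=
  ∀ (p : ℕ) (P : Fin p → Set V), (∀ i, (P i).Nonempty) →
    (Pairwise fun i j => Disjoint (P i) (P j)) → (∀ v : V, ∃ i, v ∈ P i) →
    k * (p - 1) ≤
      Nat.card {e : E // ∃ i j, i ≠ j ∧
        (∃ x ∈ edges e, x ∈ P i) ∧ (∃ y ∈ edges e, y ∈ P j)}

/-!
Let `P` be a partition of the vertices into `p ≥ 2` nonempty parts. Deleting the hyperedges of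
the cut `δ(P i)` separates `P i` from the other parts, so `3k`-edge-connectivity gives
`|δ(P i)| ≥ 3k` for every `i`. A hyperedge with at most three vertices lies in the cut of at most
three parts, and only in cuts at all if it crosses the partition; double counting therefore gives
`3kp ≤ ∑ᵢ |δ(P i)| ≤ 3 · #crossing`, i.e. at least `kp ≥ k(p - 1)` crossing hyperedges.
-/

open Finset

namespace Hypergraph

open Classical

variable {V E ι : Type} (edges : E → Multiset V)

def cut (S : Set V) : Set E :=
  {e | (∃ x ∈ edges e, x ∈ S) ∧ ∃ y ∈ edges e, y ∉ S}

def crossing (P : ι → Set V) : Set E :=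
  {e | ∃ i j, i ≠ j ∧ (∃ x ∈ edges e, x ∈ P i) ∧ (∃ y ∈ edges e, y ∈ P j)}

variable {edges}

theorem mem_of_reflTransGen_avoiding_cut {A : Set V} {S : Set V} {u v : V}
    (h : Relation.ReflTransGen
      (fun x y => x ∈ A ∧ y ∈ A ∧ HAdj edges {e | e ∉ cut edges S} x y) u v)
    (hu : u ∈ S) : v ∈ S := by
  induction h with
  | refl => exact hu
  | tail _ hstep ih =>
    obtain ⟨-, -, e, he, hxe, hye⟩ := hstep
    by_contra hy
    exact he ⟨⟨_, hxe, ih⟩, _, hye, hy⟩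

theorem HEdgeConn.le_card_cut {k : ℕ} (h : HEdgeConn edges k) {S : Set V}
    (hS : S.Nonempty) (hSc : Sᶜ.Nonempty) : k ≤ Nat.card (cut edges S) := by
  by_contra! hlt
  obtain ⟨u, hu⟩ := hS
  obtain ⟨v, hv⟩ := hSc
  exact hv (mem_of_reflTransGen_avoiding_cut (h _ hlt u trivial v trivial) hu)

theorem card_filter_exists_mem_le [Fintype ι] {P : ι → Set V}
    (hP : Pairwise fun i j => Disjoint (P i) (P j)) (t : Finset V) :
    #{i | ∃ x ∈ t, x ∈ P i} ≤ #t := by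
  calc #{i | ∃ x ∈ t, x ∈ P i}
      ≤ #(({i | ∃ x ∈ t, x ∈ P i} : Finset ι).biUnion fun i => {x ∈ t | x ∈ P i}) := by
        refine card_le_card_biUnion ?_ ?_
        · intro i _ j _ hij
          exact disjoint_filter.2 fun x _ hi hj => (hP hij).ne_of_mem hi hj rfl
        · intro i hi
          obtain ⟨x, hx, hxi⟩ := (mem_filter.1 hi).2
          exact ⟨x, mem_filter.2 ⟨hx, hxi⟩⟩
    _ ≤ #t := card_le_card (biUnion_subset.2 fun _ _ => filter_subset _ _)

theorem mem_crossing_of_mem_cut {P : ι → Set V} (hcover : ∀ v, ∃ i, v ∈ P i) {e : E} {i : ι}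
    (h : e ∈ cut edges (P i)) : e ∈ crossing edges P := by
  obtain ⟨hx, y, hy, hyi⟩ := h
  obtain ⟨j, hyj⟩ := hcover y
  exact ⟨i, j, fun hij => hyi (hij ▸ hyj), hx, y, hy, hyj⟩

theorem card_filter_mem_cut_le [Fintype ι] {P : ι → Set V}
    (hP : Pairwise fun i j => Disjoint (P i) (P j)) (e : E) :
    #{i | e ∈ cut edges (P i)} ≤ (edges e).card :=
  calc #{i | e ∈ cut edges (P i)}
      ≤ #{i | ∃ x ∈ (edges e).toFinset, x ∈ P i} :=
        card_le_card fun i => by simpa only [mem_filter, mem_univ, true_and, Multiset.mem_toFinset]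
          using fun hi => hi.1
    _ ≤ #(edges e).toFinset := card_filter_exists_mem_le hP _
    _ ≤ (edges e).card := Multiset.toFinset_card_le _

theorem sum_card_cut_le [Fintype E] [Fintype ι] {P : ι → Set V} {r : ℕ}
    (hP : Pairwise fun i j => Disjoint (P i) (P j)) (hcover : ∀ v, ∃ i, v ∈ P i)
    (hsize : ∀ e, (edges e).card ≤ r) :
    ∑ i, Nat.card (cut edges (P i)) ≤ r * Nat.card (crossing edges P) := by
  simp only [Nat.card_eq_fintype_card, Fintype.card_subtype]
  calc ∑ i, #{e | e ∈ cut edges (P i)}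
      = ∑ e, #{i | e ∈ cut edges (P i)} :=
        sum_card_bipartiteAbove_eq_sum_card_bipartiteBelow _
    _ = ∑ e with e ∈ crossing edges P, #{i | e ∈ cut edges (P i)} := by
        refine (sum_filter_of_ne fun e _ he => ?_).symm
        obtain ⟨i, hi⟩ := card_ne_zero.1 he
        exact mem_crossing_of_mem_cut hcover (mem_filter.1 hi).2
    _ ≤ ∑ e with e ∈ crossing edges P, r :=
        sum_le_sum fun e _ => (card_filter_mem_cut_le hP e).trans (hsize e)
    _ = r * #{e | e ∈ crossing edges P} := by rw [sum_const, smul_eq_mul, mul_comm]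

end Hypergraph

open Hypergraph in
theorem stmt2_general (k : ℕ) (V E : Type) [Fintype E]
    (edges : E → Multiset V)
    (hsize : ∀ e, (edges e).card ≤ 3)
    (hconn : HEdgeConn edges (3 * k)) :
    HPartConn edges k := by
  intro p P hPne hP hcover
  obtain hp | hp := Nat.lt_or_ge p 2
  · interval_cases p <;> simp
  have hcut (i : Fin p) : 3 * k ≤ Nat.card (cut edges (P i)) := by
    obtain ⟨j, hji⟩ := Fintype.exists_ne_of_one_lt_card (by rwa [Fintype.card_fin]) i
    obtain ⟨v, hv⟩ := hPne j
    exact hconn.le_card_cut (hPne i) ⟨v, (hP hji).notMem_of_mem_left hv⟩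
  have : 3 * (k * p) ≤ 3 * Nat.card (crossing edges P) :=
    calc 3 * (k * p) = ∑ _i : Fin p, 3 * k := by
          rw [sum_const, card_univ, Fintype.card_fin, smul_eq_mul]; ring
      _ ≤ ∑ i, Nat.card (cut edges (P i)) := sum_le_sum fun i _ => hcut i
      _ ≤ 3 * Nat.card (crossing edges P) := sum_card_cut_le hP hcover hsize
  calc k * (p - 1) ≤ k * p := Nat.mul_le_mul_left k (p.sub_le 1)
    _ ≤ Nat.card (crossing edges P) := Nat.le_of_mul_le_mul_left this (by norm_num)

/-- every `3k`-edge-connected hypergraph with hyperedges of size at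
most three is `k`-partition-connected. -/
theorem stmt2 (k : ℕ) (V E : Type) [Fintype V] [Fintype E]
    (edges : E → Multiset V)
    (hne : ∀ e, edges e ≠ 0) (hsize : ∀ e, (edges e).card ≤ 3)
    (hconn : HEdgeConn edges (3 * k)) :
    HPartConn edges k :=
  stmt2_general k V E edges hsize hconn
end

section
/- For every multigraph G there exist two edge-disjoint spanning subgraphs H₀ and H₁ partitioning the edges of G such that for every vertex v, both |deg_{H₀}(v) − deg_G(v)/2| ≤ 1 and |deg_{H₁}(v) − deg_G(v)/2| ≤ 1. -/
/-!
It suffices to colour the edges by `±1` so that every vertex has signed degree (imbalance) at most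
`2` in absolute value. Take a trail from `a` to `u` containing every edge at `a`, colour the other
edges by induction, and colour the trail alternately: its inner vertices stay balanced, `a` gets
imbalance `±1` from the trail and nothing else (unless `a = u`), and the global sign of the
alternating colouring is chosen to push the imbalance at `u` towards `0`. No Euler tour or parity
argument is needed.
-/

open scoped Classical

/-- The number of times `v` occurs as an endpoint of the unordered pair `p`
(a loop at `v` counts twice). -/
noncomputable def sym2Count {V : Type} (v : V) : Sym2 V → ℕ :=
  Sym2.lift ⟨fun a b => (if a = v then 1 else 0) + (if b = v then 1 else 0),
    fun a b => by ring⟩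

/-- The degree of `v` in the spanning subgraph with edge set `F` (loops count twice). -/
noncomputable def mdeg {V E : Type} [Fintype E] (ends : E → Sym2 V)
    (F : Set E) (v : V) : ℕ :=
  ∑ e ∈ Finset.univ.filter (· ∈ F), sym2Count v (ends e)

section

variable {V E : Type} (ends : E → Sym2 V)

theorem sym2Count_mk (v a b : V) :
    sym2Count v s(a, b) = (if a = v then 1 else 0) + (if b = v then 1 else 0) := rfl

theorem sym2Count_eq_zero {v : V} {z : Sym2 V} (h : v ∉ z) : sym2Count v z = 0 := by
  induction z using Sym2.ind with
  | h a b =>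
    rw [Sym2.mem_iff, not_or] at h
    simp [sym2Count_mk, Ne.symm h.1, Ne.symm h.2]

noncomputable def signedDeg (f : E → ℤˣ) (s : Finset E) (v : V) : ℤ :=
  ∑ e ∈ s, (f e : ℤ) * sym2Count v (ends e)

theorem signedDeg_piecewise {s t : Finset E} (hts : t ⊆ s) (g f : E → ℤˣ) (v : V) :
    signedDeg ends (t.piecewise g f) s v = signedDeg ends g t v + signedDeg ends f (s \ t) v := by
  unfold signedDeg
  rw [← Finset.sum_sdiff hts, add_comm]
  congr 1
  · exact Finset.sum_congr rfl fun e he => by rw [t.piecewise_eq_of_mem g f he]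
  · exact Finset.sum_congr rfl fun e he => by
      rw [t.piecewise_eq_of_notMem g f (Finset.mem_sdiff.mp he).2]

theorem signedDeg_eq_zero {f : E → ℤˣ} {s : Finset E} {v : V} (h : ∀ e ∈ s, v ∉ ends e) :
    signedDeg ends f s v = 0 :=
  Finset.sum_eq_zero fun e he => by rw [sym2Count_eq_zero (h e he)]; simp

inductive IsTrail : Finset E → V → V → Prop
  | nil (v : V) : IsTrail ∅ v v
  | cons {e : E} {t : Finset E} {a m b : V} (he : e ∉ t) (h : ends e = s(a, m))
      (ht : IsTrail t m b) : IsTrail (insert e t) a b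

namespace IsTrail

variable {ends}

theorem exists_signedDeg_eq {t : Finset E} {a b : V} (ht : IsTrail ends t a b) (τ : ℤˣ) :
    ∃ (g : E → ℤˣ) (σ : ℤˣ), ∀ v, signedDeg ends g t v =
      τ * ((if b = v then 1 else 0) - σ * (if a = v then 1 else 0)) := by
  induction ht with
  | nil w => exact ⟨fun _ => 1, 1, fun v => by simp [signedDeg]⟩
  | @cons e t a m b he h _ ih =>
    obtain ⟨g, σ, hg⟩ := ih
    refine ⟨Function.update g e (σ * τ), -σ, fun v => ?_⟩
    have hrest : signedDeg ends (Function.update g e (σ * τ)) t v = signedDeg ends g t v :=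
      Finset.sum_congr rfl fun x hx => by rw [Function.update_of_ne (ne_of_mem_of_not_mem hx he)]
    rw [signedDeg, Finset.sum_insert he, ← signedDeg, hrest, hg, Function.update_self, h,
      sym2Count_mk]
    push_cast
    ring

theorem eq_of_eq_empty {t : Finset E} {a b : V} (ht : IsTrail ends t a b) (h : t = ∅) : a = b := by
  cases ht with
  | nil => rfl
  | cons => exact absurd h (Finset.insert_ne_empty _ _)

theorem exists_maximal {s t : Finset E} {a u : V} (ht : IsTrail ends t a u) (hts : t ⊆ s) :
    ∃ t' a', t' ⊆ s ∧ IsTrail ends t' a' u ∧ ∀ e ∈ s, a' ∈ ends e → e ∈ t' := by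
  by_cases hmax : ∀ e ∈ s, a ∈ ends e → e ∈ t
  · exact ⟨t, a, hts, ht, hmax⟩
  push Not at hmax
  obtain ⟨e, hes, hae, het⟩ := hmax
  obtain ⟨w, hw⟩ := Sym2.mem_iff_exists.mp hae
  exact (ht.cons het (hw.trans Sym2.eq_swap)).exists_maximal (Finset.insert_subset hes hts)
termination_by s.card - t.card
decreasing_by
  have hcard := Finset.card_le_card (Finset.insert_subset hes hts)
  rw [Finset.card_insert_of_notMem het] at hcard ⊢
  omega

end IsTrail

theorem abs_opposing_sign_mul_add_le_two {y c : ℤ} (hy : |y| ≤ 2) (hc₀ : 0 ≤ c) (hc₂ : c ≤ 2) :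
    |((if 0 ≤ y then -1 else 1 : ℤˣ) : ℤ) * c + y| ≤ 2 := by
  rw [abs_le] at hy ⊢
  split_ifs <;> push_cast <;> constructor <;> linarith

theorem exists_abs_signedDeg_le_two (s : Finset E) :
    ∃ f : E → ℤˣ, ∀ v, |signedDeg ends f s v| ≤ 2 := by
  induction s using Finset.strongInduction with
  | H s ih =>
  rcases s.eq_empty_or_nonempty with rfl | ⟨e₀, he₀⟩
  · exact ⟨1, fun v => by simp [signedDeg]⟩
  obtain ⟨u, hu⟩ : ∃ u, u ∈ ends e₀ := ⟨(ends e₀).out.1, Sym2.out_fst_mem _⟩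
  obtain ⟨t, a, hts, ht, hmax⟩ := (IsTrail.nil u).exists_maximal (Finset.empty_subset s)
  have ht_ne : t.Nonempty := by
    rw [Finset.nonempty_iff_ne_empty]
    rintro rfl
    obtain rfl := ht.eq_of_eq_empty rfl
    exact Finset.notMem_empty e₀ (hmax e₀ he₀ hu)
  obtain ⟨f, hf⟩ := ih (s \ t) (Finset.sdiff_ssubset hts ht_ne)
  obtain ⟨g, σ, hg⟩ :=
    ht.exists_signedDeg_eq (if 0 ≤ signedDeg ends f (s \ t) u then -1 else 1)
  have ha : signedDeg ends f (s \ t) a = 0 := signedDeg_eq_zero ends fun e he hae =>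
    (Finset.mem_sdiff.mp he).2 (hmax e (Finset.mem_sdiff.mp he).1 hae)
  refine ⟨t.piecewise g f, fun v => ?_⟩
  rw [signedDeg_piecewise ends hts, hg]
  by_cases huv : u = v
  · subst huv
    rw [if_pos rfl]
    apply abs_opposing_sign_mul_add_le_two (hf u) <;>
      rcases Int.units_eq_one_or σ with rfl | rfl <;> split_ifs <;> norm_num
  by_cases hav : a = v
  · subst hav
    rw [if_neg huv, if_pos rfl, ha]
    rcases Int.units_eq_one_or σ with rfl | rfl <;> split_ifs <;> norm_num
  · simpa [huv, hav] using hf v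

theorem mdeg_add_mdeg_compl [Fintype E] (F : Set E) (v : V) :
    mdeg ends F v + mdeg ends Fᶜ v = mdeg ends Set.univ v := by
  simp only [mdeg, Set.mem_compl_iff, Set.mem_univ, Finset.filter_true]
  exact Finset.sum_filter_add_sum_filter_not _ _ _

theorem mdeg_sub_mdeg_compl [Fintype E] (f : E → ℤˣ) (v : V) :
    (mdeg ends {e | f e = 1} v : ℤ) - mdeg ends {e | f e = 1}ᶜ v =
      signedDeg ends f Finset.univ v := by
  simp only [mdeg, signedDeg, Finset.sum_filter, Nat.cast_sum, Nat.cast_ite,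
    ← Finset.sum_sub_distrib]
  refine Finset.sum_congr rfl fun e _ => ?_
  rcases Int.units_eq_one_or (f e) with h | h <;> simp [h]

end

theorem abs_sub_add_div_two_le_one {x y : ℝ} (h : |x - y| ≤ 2) : |x - (x + y) / 2| ≤ 1 := by
  rw [show x - (x + y) / 2 = (x - y) / 2 by ring, abs_div, abs_two]
  linarith

theorem stmt5_general (V E : Type) [Fintype E] (ends : E → Sym2 V) :
    ∃ F : Set E,
      (∀ v : V, |(mdeg ends F v : ℝ) - (mdeg ends Set.univ v : ℝ) / 2| ≤ 1) ∧
      (∀ v : V, |(mdeg ends Fᶜ v : ℝ) - (mdeg ends Set.univ v : ℝ) / 2| ≤ 1) := by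
  obtain ⟨f, hf⟩ := exists_abs_signedDeg_le_two ends Finset.univ
  set F : Set E := {e | f e = 1}
  have hsum (v : V) : (mdeg ends Set.univ v : ℝ) = mdeg ends F v + mdeg ends Fᶜ v := by
    exact_mod_cast (mdeg_add_mdeg_compl ends F v).symm
  have hdiff (v : V) : |(mdeg ends F v : ℝ) - mdeg ends Fᶜ v| ≤ 2 := by
    have := hf v
    rw [← mdeg_sub_mdeg_compl] at this
    exact_mod_cast this
  refine ⟨F, fun v => ?_, fun v => ?_⟩
  · rw [hsum]
    exact abs_sub_add_div_two_le_one (hdiff v)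
  · rw [hsum, add_comm]
    exact abs_sub_add_div_two_le_one (by rw [abs_sub_comm]; exact hdiff v)

/-- the edges of any multigraph can be partitioned into two spanning
subgraphs whose degrees at every vertex are within 1 of half the original degree. -/
theorem stmt5 (V E : Type) [Fintype V] [Fintype E] (ends : E → Sym2 V) :
    ∃ F : Set E,
      (∀ v : V, |(mdeg ends F v : ℝ) - (mdeg ends Set.univ v : ℝ) / 2| ≤ 1) ∧
      (∀ v : V, |(mdeg ends Fᶜ v : ℝ) - (mdeg ends Set.univ v : ℝ) / 2| ≤ 1) :=
  stmt5_general V E ends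
end

section
/- Let m₁,…,m_k be positive integers with Σ_{i∈[k]} 2^{-m_i} ≤ 1, and let G be a multigraph. Then there exist pairwise edge-disjoint spanning subgraphs G₁,…,G_k of G such that for every i and every vertex v, |deg_{G_i}(v) − 2^{-m_i}·deg_G(v)| ≤ 2. -/
open scoped Classical

/-!
To halve a multigraph, repeatedly remove a maximal walk (one whose last vertex has no remaining
edge) and colour its edges alternately. Inner vertices of the walk get equally many edges of
both colours; only its ends become unbalanced, by `1` each, or by `0` or `2` at the start of a
closed walk. Let `R v` be the imbalance accumulated at `v` so far and start each walk with the
colour that moves `R` at its first vertex towards `0`. Then `|R v| ≤ 2` always, and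
`|R v| ≤ 1` while `v` has odd remaining degree, i.e. while `v` may still end a later walk.
So every vertex ends up balanced up to `2`.

For the fractions, the weights `2⁻ᵐⁱ ≤ 1/2` split into two groups of total at most `1/2`
each, since dyadic weights exceeding `1/2` in total have a subfamily summing to exactly `1/2`.
Halve the edge set, give each group one half and recurse with the exponents `mᵢ - 1`. The
halving error `1` enters a `2⁻ᵐ`-fraction multiplied by `2¹⁻ᵐ`, so the error bound
`2 - 2 · 2⁻ᵐ` is preserved.
-/

lemma Multiset.exists_le_map_eq {α β : Type*} {f : α → β} {s : Multiset α}
    {t : Multiset β} (h : t ≤ s.map f) : ∃ a ≤ s, a.map f = t := by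
  induction t using Multiset.induction_on generalizing s with
  | empty => exact ⟨0, Multiset.zero_le s, rfl⟩
  | cons b t ih =>
    obtain ⟨x, hx, rfl⟩ :=
      Multiset.mem_map.1 (Multiset.mem_of_le h (Multiset.mem_cons_self _ _))
    rw [← Multiset.cons_erase hx, Multiset.map_cons, Multiset.cons_le_cons_iff] at h
    obtain ⟨a, ha, rfl⟩ := ih h
    exact ⟨x ::ₘ a, (Multiset.cons_le_cons x ha).trans_eq (Multiset.cons_erase hx),
      Multiset.map_cons f x a⟩

section Dyadic

variable {ι : Type}

lemma exists_subset_sum_two_pow_eq (s : Finset ι) (a : ι → ℕ) {q : ℕ}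
    (ha : ∀ i ∈ s, a i ≤ q) (h : 2 ^ q ≤ ∑ i ∈ s, 2 ^ a i) :
    ∃ u ⊆ s, ∑ i ∈ u, 2 ^ a i = 2 ^ q := by
  induction s using Finset.induction_on_min_value a with
  | empty => simp at h
  | insert j s hj hmin ih =>
    by_cases hs : 2 ^ q ≤ ∑ i ∈ s, 2 ^ a i
    · obtain ⟨u, hu, hsum⟩ := ih (fun i hi => ha i (Finset.mem_insert_of_mem hi)) hs
      exact ⟨u, hu.trans (Finset.subset_insert j s), hsum⟩
    refine ⟨insert j s, subset_rfl, le_antisymm ?_ h⟩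
    -- `2 ^ a j` divides both `2 ^ q` and the sum over `s`, which is smaller than `2 ^ q`
    obtain ⟨x, hx⟩ : 2 ^ a j ∣ ∑ i ∈ s, 2 ^ a i :=
      Finset.dvd_sum fun i hi => pow_dvd_pow 2 (hmin i hi)
    obtain ⟨y, hy⟩ : 2 ^ a j ∣ 2 ^ q := pow_dvd_pow 2 (ha j (Finset.mem_insert_self j s))
    rw [hx, hy] at hs
    rw [Finset.sum_insert hj, hx, hy]
    have hxy : x < y := lt_of_not_ge fun hyx => hs (Nat.mul_le_mul_left _ hyx)
    nlinarith

lemma exists_subset_sum_two_pow_le_and_sdiff_le (s : Finset ι) (a : ι → ℕ) {q : ℕ}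
    (ha : ∀ i ∈ s, a i ≤ q) (h : ∑ i ∈ s, 2 ^ a i ≤ 2 ^ (q + 1)) :
    ∃ u ⊆ s, ∑ i ∈ u, 2 ^ a i ≤ 2 ^ q ∧ ∑ i ∈ s \ u, 2 ^ a i ≤ 2 ^ q := by
  by_cases hs : ∑ i ∈ s, 2 ^ a i ≤ 2 ^ q
  · exact ⟨s, subset_rfl, hs, by simp⟩
  obtain ⟨u, hu, hsum⟩ := exists_subset_sum_two_pow_eq s a ha (by omega)
  have := Finset.sum_sdiff (f := fun i => 2 ^ a i) hu
  rw [pow_succ] at h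
  exact ⟨u, hu, hsum.le, by omega⟩

lemma inv_two_pow_eq_div {m n : ℕ} (h : m ≤ n) :
    ((2 : ℝ) ^ m)⁻¹ = 2 ^ (n - m) / 2 ^ n := by
  rw [pow_sub₀ _ two_ne_zero h]
  field_simp

lemma sum_inv_two_pow_eq_div {t : Finset ι} {m : ι → ℕ} {n : ℕ}
    (h : ∀ i ∈ t, m i ≤ n) :
    ∑ i ∈ t, ((2 : ℝ) ^ m i)⁻¹ = ((∑ i ∈ t, 2 ^ (n - m i) : ℕ) : ℝ) / 2 ^ n := by
  push_cast
  rw [Finset.sum_div]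
  exact Finset.sum_congr rfl fun i hi => inv_two_pow_eq_div (h i hi)

lemma exists_subset_sum_inv_two_pow_pred_le_one (s : Finset ι) (m : ι → ℕ)
    (hm : ∀ i ∈ s, 1 ≤ m i) (h : ∑ i ∈ s, ((2 : ℝ) ^ m i)⁻¹ ≤ 1) :
    ∃ u ⊆ s, ∑ i ∈ u, ((2 : ℝ) ^ (m i - 1))⁻¹ ≤ 1 ∧
      ∑ i ∈ s \ u, ((2 : ℝ) ^ (m i - 1))⁻¹ ≤ 1 := by
  rcases s.eq_empty_or_nonempty with rfl | ⟨j, hj⟩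
  · exact ⟨∅, subset_rfl, by simp, by simp⟩
  obtain ⟨q, hq⟩ := Nat.exists_eq_add_of_le' ((hm j hj).trans (Finset.le_sup hj))
  have hle : ∀ i ∈ s, m i ≤ q + 1 := fun i hi => hq ▸ Finset.le_sup hi
  have hpred : ∀ t ⊆ s, ∀ i ∈ t, m i - 1 ≤ q := fun t ht i hi => by
    have := hle i (ht hi); omega
  have hexp : ∑ i ∈ s, 2 ^ (q + 1 - m i) = ∑ i ∈ s, 2 ^ (q - (m i - 1)) :=
    Finset.sum_congr rfl fun i hi => by
      have := hm i hi; rw [show q + 1 - m i = q - (m i - 1) by omega]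
  rw [sum_inv_two_pow_eq_div hle, hexp, div_le_one (by positivity)] at h
  obtain ⟨u, hu, hu₁, hu₂⟩ := exists_subset_sum_two_pow_le_and_sdiff_le s _
    (fun i _ => Nat.sub_le q (m i - 1)) (by exact_mod_cast h)
  refine ⟨u, hu, ?_, ?_⟩
  · rw [sum_inv_two_pow_eq_div (hpred u hu), div_le_one (by positivity)]
    exact_mod_cast hu₁
  · rw [sum_inv_two_pow_eq_div (hpred _ Finset.sdiff_subset), div_le_one (by positivity)]
    exact_mod_cast hu₂

lemma abs_sub_half_mul_le {q a b c : ℝ} (hq : 0 ≤ q) (hab : |a - q * b| ≤ 2 - 2 * q)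
    (hbc : |b - c / 2| ≤ 1) : |a - q / 2 * c| ≤ 2 - 2 * (q / 2) := by
  have hq' : |q * (b - c / 2)| ≤ q := by
    rw [abs_mul, abs_of_nonneg hq]
    exact mul_le_of_le_one_right hq hbc
  calc |a - q / 2 * c| = |(a - q * b) + q * (b - c / 2)| := by ring_nf
    _ ≤ |a - q * b| + |q * (b - c / 2)| := abs_add_le _ _
    _ ≤ 2 - 2 * (q / 2) := by linarith

lemma inv_two_pow_eq_half {m : ℕ} (hm : 1 ≤ m) :
    ((2 : ℝ) ^ m)⁻¹ = ((2 : ℝ) ^ (m - 1))⁻¹ / 2 := by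
  obtain ⟨k, rfl⟩ := Nat.exists_eq_add_of_le' hm
  rw [Nat.add_sub_cancel, pow_succ, mul_inv, div_eq_mul_inv]

lemma eq_singleton_of_sum_inv_two_pow_le_one {s : Finset ι} {m : ι → ℕ} {i : ι}
    (hi : i ∈ s) (hmi : m i = 0) (h : ∑ j ∈ s, ((2 : ℝ) ^ m j)⁻¹ ≤ 1) : s = {i} := by
  rw [← Finset.add_sum_erase s _ hi, hmi, pow_zero, inv_one, add_le_iff_nonpos_right] at h
  have : s.erase i = ∅ := by
    by_contra hne
    exact (Finset.sum_pos (fun j _ => by positivity) (Finset.nonempty_iff_ne_empty.2 hne)).not_ge h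
  rw [← Finset.insert_erase hi, this, insert_empty_eq]

end Dyadic

namespace Multigraph

variable {V : Type}

lemma sym2Count_mk (v a b : V) :
    sym2Count v s(a, b) = (if a = v then 1 else 0) + (if b = v then 1 else 0) := rfl

noncomputable def edgeDeg (s : Multiset (Sym2 V)) (v : V) : ℕ := (s.map (sym2Count v)).sum

@[simp] lemma edgeDeg_zero (v : V) : edgeDeg 0 v = 0 := rfl

@[simp] lemma edgeDeg_add (s t : Multiset (Sym2 V)) (v : V) :
    edgeDeg (s + t) v = edgeDeg s v + edgeDeg t v := by
  simp [edgeDeg]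

@[simp] lemma edgeDeg_cons (e : Sym2 V) (s : Multiset (Sym2 V)) (v : V) :
    edgeDeg (e ::ₘ s) v = sym2Count v e + edgeDeg s v := by
  simp [edgeDeg]

@[simp] lemma edgeDeg_singleton (e : Sym2 V) (v : V) : edgeDeg {e} v = sym2Count v e := by
  simp [edgeDeg]

lemma edgeDeg_sub_add {s t : Multiset (Sym2 V)} (h : t ≤ s) (v : V) :
    edgeDeg (s - t) v + edgeDeg t v = edgeDeg s v := by
  rw [← edgeDeg_add, tsub_add_cancel_of_le h]

lemma exists_edgeDeg_pos {s : Multiset (Sym2 V)} (hs : s ≠ 0) : ∃ u, 0 < edgeDeg s u := by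
  obtain ⟨e, he⟩ := Multiset.exists_mem_of_ne_zero hs
  obtain ⟨r, rfl⟩ := Multiset.exists_cons_of_mem he
  induction e using Sym2.ind with
  | _ u w => exact ⟨u, by simp [sym2Count_mk]⟩

lemma exists_mk_mem_of_edgeDeg_ne_zero {s : Multiset (Sym2 V)} {u : V} (h : edgeDeg s u ≠ 0) :
    ∃ w, s(u, w) ∈ s := by
  contrapose! h
  refine Multiset.sum_eq_zero fun n hn => ?_
  obtain ⟨e, he, rfl⟩ := Multiset.mem_map.1 hn
  induction e using Sym2.ind with
  | _ a b =>
    have ha : a ≠ u := fun hau => h b (hau ▸ he)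
    have hb : b ≠ u := fun hbu => h a (hbu ▸ Sym2.eq_swap ▸ he)
    simp [sym2Count_mk, ha, hb]

def walkEdges : List V → Multiset (Sym2 V)
  | a :: b :: l => s(a, b) ::ₘ walkEdges (b :: l)
  | _ => 0

def walkAlt (c : Bool) : List V → Multiset (Sym2 V)
  | a :: b :: l => (if c then {s(a, b)} else 0) + walkAlt (!c) (b :: l)
  | _ => 0

lemma walkAlt_add_walkAlt_not (c : Bool) (l : List V) :
    walkAlt c l + walkAlt (!c) l = walkEdges l := by
  induction l generalizing c with
  | nil => rfl
  | cons a l ih =>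
    cases l with
    | nil => rfl
    | cons b l =>
      rw [walkEdges, ← ih (!c), Bool.not_not, ← Multiset.singleton_add]
      cases c <;> simp [walkAlt, add_left_comm]

lemma edgeDeg_walkAlt_sub_walkAlt_not (c : Bool) (a : V) (l : List V) (v : V) :
    (edgeDeg (walkAlt c (a :: l)) v : ℤ) - edgeDeg (walkAlt (!c) (a :: l)) v =
      (if c then 1 else -1) *
        ((if a = v then 1 else 0) - (-1) ^ l.length * (if l.getLastD a = v then 1 else 0)) := by
  induction l generalizing a c with
  | nil => simp [walkAlt]
  | cons b l ih =>
    have h := ih c b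
    rw [List.getLastD_cons, List.length_cons, pow_succ]
    cases c <;>
      simp only [walkAlt, Bool.not_true, Bool.not_false, if_true, Bool.false_eq_true, if_false,
        edgeDeg_add, edgeDeg_zero, edgeDeg_singleton, sym2Count_mk] at h ⊢ <;>
      push_cast at h ⊢ <;> linear_combination -h

lemma exists_walk_edgeDeg_getLastD_eq_zero (s : Multiset (Sym2 V)) (u : V) :
    ∃ l : List V, walkEdges (u :: l) ≤ s ∧
      edgeDeg (s - walkEdges (u :: l)) (l.getLastD u) = 0 := by
  induction s using Multiset.strongInductionOn generalizing u with
  | ih s ih =>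
    by_cases hu : edgeDeg s u = 0
    · exact ⟨[], Multiset.zero_le s, by simpa [walkEdges] using hu⟩
    obtain ⟨w, hw⟩ := exists_mk_mem_of_edgeDeg_ne_zero hu
    obtain ⟨l, hle, hmax⟩ := ih _ (Multiset.erase_lt.2 hw) w
    refine ⟨w :: l, ?_, ?_⟩
    · exact (Multiset.cons_le_cons _ hle).trans_eq (Multiset.cons_erase hw)
    · rwa [walkEdges, Multiset.sub_cons, List.getLastD_cons]

lemma exists_walk_split_balanced {s : Multiset (Sym2 V)} {R : V → ℤ} {u : V} {l : List V}
    (hle : walkEdges (u :: l) ≤ s) (hmax : edgeDeg (s - walkEdges (u :: l)) (l.getLastD u) = 0)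
    (hR : ∀ v, |R v| ≤ 2) (hodd : ∀ v, Odd (edgeDeg s v) → |R v| ≤ 1) :
    ∃ P Q, P + Q = walkEdges (u :: l) ∧ ∀ v, |R v + (edgeDeg P v - edgeDeg Q v)| ≤ 2 ∧
      (Odd (edgeDeg (s - walkEdges (u :: l)) v) → |R v + (edgeDeg P v - edgeDeg Q v)| ≤ 1) := by
  -- the first edge gets the colour that moves `R u` towards `0`
  obtain ⟨P, Q, ε, hPQ, hε, hεR, hD⟩ : ∃ (P Q : Multiset (Sym2 V)) (ε : ℤ),
      P + Q = walkEdges (u :: l) ∧ (ε = 1 ∨ ε = -1) ∧ ε * R u ≤ 0 ∧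
      ∀ v, (edgeDeg P v : ℤ) - edgeDeg Q v = ε * ((if u = v then 1 else 0) -
        (-1) ^ l.length * (if l.getLastD u = v then 1 else 0)) := by
    by_cases hRu : R u ≤ 0
    · exact ⟨_, _, 1, walkAlt_add_walkAlt_not true _, Or.inl rfl, by linarith,
        edgeDeg_walkAlt_sub_walkAlt_not true u l⟩
    · exact ⟨_, _, -1, walkAlt_add_walkAlt_not false _, Or.inr rfl, by linarith,
        edgeDeg_walkAlt_sub_walkAlt_not false u l⟩
  refine ⟨P, Q, hPQ, fun v => ?_⟩
  have hDv := hD v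
  have hdeg : edgeDeg (s - walkEdges (u :: l)) v + (edgeDeg P v + edgeDeg Q v) = edgeDeg s v := by
    rw [← edgeDeg_add, hPQ, edgeDeg_sub_add hle]
  have hres : (if l.getLastD u = v then edgeDeg (s - walkEdges (u :: l)) v else 0) = 0 := by
    split_ifs with h
    exacts [h ▸ hmax, rfl]
  have hεRv : (if u = v then ε * R v else 0) ≤ 0 := by
    split_ifs with h
    exacts [h ▸ hεR, le_rfl]
  have hRv := abs_le.1 (hR v)
  have hoddv := hodd v
  simp only [Nat.odd_iff, abs_le, imp_iff_not_or] at hoddv ⊢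
  rcases neg_one_pow_eq_or ℤ l.length with hτ | hτ <;> rw [hτ] at hDv <;>
    rcases hε with rfl | rfl <;> split_ifs at hDv hres hεRv <;> omega

theorem exists_balanced_split (s : Multiset (Sym2 V)) (R : V → ℤ) (hR : ∀ v, |R v| ≤ 2)
    (hodd : ∀ v, Odd (edgeDeg s v) → |R v| ≤ 1) :
    ∃ t₁ t₂, t₁ + t₂ = s ∧ ∀ v, |R v + edgeDeg t₁ v - edgeDeg t₂ v| ≤ 2 := by
  induction s using Multiset.strongInductionOn generalizing R with
  | ih s ih =>
  rcases eq_or_ne s 0 with rfl | hs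
  · exact ⟨0, 0, rfl, by simpa using hR⟩
  obtain ⟨u, hu⟩ := exists_edgeDeg_pos hs
  obtain ⟨l, hle, hmax⟩ := exists_walk_edgeDeg_getLastD_eq_zero s u
  have hW : walkEdges (u :: l) ≠ 0 := by
    cases l with
    | nil => simp [walkEdges] at hmax; omega
    | cons b l => exact Multiset.cons_ne_zero
  have hlt : s - walkEdges (u :: l) < s := by
    refine lt_of_le_of_ne tsub_le_self fun h => hW ?_
    have := tsub_add_cancel_of_le hle
    rwa [h, add_eq_left] at this
  obtain ⟨P, Q, hPQ, hstep⟩ := exists_walk_split_balanced hle hmax hR hodd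
  obtain ⟨t₁, t₂, ht, hbal⟩ := ih _ hlt (fun v => R v + (edgeDeg P v - edgeDeg Q v))
    (fun v => (hstep v).1) (fun v => (hstep v).2)
  refine ⟨P + t₁, Q + t₂, ?_, fun v => ?_⟩
  · rw [add_add_add_comm, hPQ, ht, add_tsub_cancel_of_le hle]
  · have := hbal v
    simp only [edgeDeg_add, Nat.cast_add] at this ⊢
    convert this using 2
    ring

variable {E : Type} [Fintype E]

lemma mdeg_coe_finset (ends : E → Sym2 V) (S : Finset E) (v : V) :
    mdeg ends (S : Set E) v = edgeDeg (S.val.map ends) v := by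
  rw [mdeg, edgeDeg, Multiset.map_map]
  change _ = ∑ e ∈ S, sym2Count v (ends e)
  congr 1
  ext
  simp

lemma mdeg_diff_add (ends : E → Sym2 V) {A F : Set E} (h : A ⊆ F) (v : V) :
    mdeg ends (F \ A) v + mdeg ends A v = mdeg ends F v := by
  simp only [mdeg, Finset.sum_filter, ← Finset.sum_add_distrib]
  refine Finset.sum_congr rfl fun e _ => ?_
  by_cases hA : e ∈ A
  · simp [hA, h hA]
  · by_cases hF : e ∈ F <;> simp [hA, hF]

theorem exists_subset_mdeg_half (ends : E → Sym2 V) (F : Set E) :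
    ∃ A ⊆ F, ∀ v, |(mdeg ends A v : ℝ) - mdeg ends F v / 2| ≤ 1 ∧
      |(mdeg ends (F \ A) v : ℝ) - mdeg ends F v / 2| ≤ 1 := by
  set S := Finset.univ.filter (· ∈ F)
  have hF : F = (S : Set E) := by simp [S]
  obtain ⟨t₁, t₂, ht, hbal⟩ := exists_balanced_split (S.val.map ends) 0 (by simp) (by simp)
  obtain ⟨a, ha, rfl⟩ := Multiset.exists_le_map_eq (ht ▸ Multiset.le_add_right t₁ t₂)
  set A : Finset E := ⟨a, Multiset.nodup_of_le ha S.nodup⟩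
  have hAS : A ⊆ S := Multiset.subset_of_le ha
  have hAF : (A : Set E) ⊆ F := hF ▸ Finset.coe_subset.2 hAS
  refine ⟨A, hAF, fun v => ?_⟩
  have hsum : (mdeg ends (F \ A) v : ℝ) + mdeg ends A v = mdeg ends F v := by
    exact_mod_cast mdeg_diff_add ends hAF v
  have hbal' : |(mdeg ends A v : ℝ) - (mdeg ends F v - mdeg ends A v)| ≤ 2 := by
    have hFv : mdeg ends F v = edgeDeg (a.map ends) v + edgeDeg t₂ v := by
      rw [hF, mdeg_coe_finset, ← ht, edgeDeg_add]
    have h := hbal v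
    simp only [Pi.zero_apply, zero_add] at h
    have h : |(edgeDeg (a.map ends) v : ℝ) - edgeDeg t₂ v| ≤ 2 := by exact_mod_cast h
    rw [hFv, mdeg_coe_finset ends A v, Nat.cast_add, add_sub_cancel_left]
    exact h
  simp only [abs_le] at hbal' ⊢
  refine ⟨⟨?_, ?_⟩, ?_, ?_⟩ <;> linarith

variable {ι : Type}

def IsFractionFamily (ends : E → Sym2 V) (F : Set E) (s : Finset ι) (m : ι → ℕ)
    (G : ι → Set E) : Prop :=
  (∀ i ∈ s, G i ⊆ F) ∧ (s : Set ι).PairwiseDisjoint G ∧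
    ∀ i ∈ s, ∀ v, |(mdeg ends (G i) v : ℝ) - ((2 : ℝ) ^ m i)⁻¹ * mdeg ends F v| ≤
      2 - 2 * ((2 : ℝ) ^ m i)⁻¹

lemma isFractionFamily_const {ends : E → Sym2 V} {F : Set E} {s : Finset ι} {m : ι → ℕ}
    {i : ι} (hi : i ∈ s) (hmi : m i = 0) (h : ∑ j ∈ s, ((2 : ℝ) ^ m j)⁻¹ ≤ 1) :
    IsFractionFamily ends F s m fun _ => F := by
  obtain rfl := eq_singleton_of_sum_inv_two_pow_le_one hi hmi h
  refine ⟨fun _ _ => subset_rfl, by simp, fun j hj v => ?_⟩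
  rw [Finset.mem_singleton.1 hj, hmi]
  norm_num

lemma isFractionFamily_piecewise {ends : E → Sym2 V} {F A : Set E} {s u : Finset ι}
    {m : ι → ℕ} {G₁ G₂ : ι → Set E} (hA : A ⊆ F)
    (hhalf : ∀ v, |(mdeg ends A v : ℝ) - mdeg ends F v / 2| ≤ 1 ∧
      |(mdeg ends (F \ A) v : ℝ) - mdeg ends F v / 2| ≤ 1)
    (hm : ∀ i ∈ s, 1 ≤ m i)
    (h₁ : IsFractionFamily ends A u (fun i => m i - 1) G₁)
    (h₂ : IsFractionFamily ends (F \ A) (s \ u) (fun i => m i - 1) G₂) :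
    IsFractionFamily ends F s m (u.piecewise G₁ G₂) := by
  have hmem : ∀ i ∈ s, i ∉ u → i ∈ s \ u := fun i hi hiu =>
    Finset.mem_sdiff.2 ⟨hi, hiu⟩
  refine ⟨fun i hi => ?_, fun i hi j hj hij => ?_, fun i hi v => ?_⟩
  · by_cases hiu : i ∈ u
    · rw [Finset.piecewise_eq_of_mem _ _ _ hiu]
      exact (h₁.1 i hiu).trans hA
    · rw [Finset.piecewise_eq_of_notMem _ _ _ hiu]
      exact (h₂.1 i (hmem i hi hiu)).trans Set.sdiff_subset
  · simp only [Function.onFun]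
    by_cases hiu : i ∈ u <;> by_cases hju : j ∈ u <;>
      simp only [Finset.piecewise_eq_of_mem, Finset.piecewise_eq_of_notMem, hiu, hju,
        not_false_eq_true]
    · exact h₁.2.1 hiu hju hij
    · exact Set.disjoint_sdiff_right.mono (h₁.1 i hiu) (h₂.1 j (hmem j hj hju))
    · exact Set.disjoint_sdiff_left.mono (h₂.1 i (hmem i hi hiu)) (h₁.1 j hju)
    · exact h₂.2.1 (hmem i hi hiu) (hmem j hj hju) hij
  · rw [inv_two_pow_eq_half (hm i hi)]
    by_cases hiu : i ∈ u
    · rw [Finset.piecewise_eq_of_mem _ _ _ hiu]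
      exact abs_sub_half_mul_le (by positivity) (h₁.2.2 i hiu v) (hhalf v).1
    · rw [Finset.piecewise_eq_of_notMem _ _ _ hiu]
      exact abs_sub_half_mul_le (by positivity) (h₂.2.2 i (hmem i hi hiu) v) (hhalf v).2

theorem exists_isFractionFamily (ends : E → Sym2 V) (F : Set E) (s : Finset ι) (m : ι → ℕ)
    (h : ∑ i ∈ s, ((2 : ℝ) ^ m i)⁻¹ ≤ 1) : ∃ G, IsFractionFamily ends F s m G := by
  obtain ⟨n, hn⟩ : ∃ n, ∀ i ∈ s, m i ≤ n := ⟨s.sup m, fun i hi => Finset.le_sup hi⟩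
  induction n generalizing s m F with
  | zero =>
    rcases s.eq_empty_or_nonempty with rfl | ⟨i, hi⟩
    · exact ⟨fun _ => F, by simp [IsFractionFamily]⟩
    exact ⟨_, isFractionFamily_const hi (Nat.le_zero.1 (hn i hi)) h⟩
  | succ n ih =>
    by_cases h0 : ∃ i ∈ s, m i = 0
    · obtain ⟨i, hi, hmi⟩ := h0
      exact ⟨_, isFractionFamily_const hi hmi h⟩
    have hm : ∀ i ∈ s, 1 ≤ m i := fun i hi =>
      Nat.one_le_iff_ne_zero.2 fun hmi => h0 ⟨i, hi, hmi⟩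
    obtain ⟨u, hu, hu₁, hu₂⟩ := exists_subset_sum_inv_two_pow_pred_le_one s m hm h
    obtain ⟨A, hA, hhalf⟩ := exists_subset_mdeg_half ends F
    obtain ⟨G₁, hG₁⟩ := ih A u (fun i => m i - 1) hu₁ fun i hi => by
      have := hn i (hu hi); omega
    obtain ⟨G₂, hG₂⟩ := ih (F \ A) (s \ u) (fun i => m i - 1) hu₂ fun i hi => by
      have := hn i (Finset.sdiff_subset hi); omega
    exact ⟨_, isFractionFamily_piecewise hA hhalf hm hG₁ hG₂⟩

end Multigraph

theorem stmt6_general (k : ℕ) (m : Fin k → ℕ)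
    (hsum : ∑ i, ((2 : ℝ) ^ (m i))⁻¹ ≤ 1)
    (V E : Type) [Fintype E] (ends : E → Sym2 V) :
    ∃ F : Fin k → Set E,
      (Pairwise fun i j => Disjoint (F i) (F j)) ∧
      ∀ i, ∀ v : V,
        |(mdeg ends (F i) v : ℝ) -
          ((2 : ℝ) ^ (m i))⁻¹ * (mdeg ends Set.univ v : ℝ)| ≤ 2 := by
  obtain ⟨G, -, hdisj, hdev⟩ :=
    Multigraph.exists_isFractionFamily ends Set.univ Finset.univ m hsum
  refine ⟨G, fun i j hij => hdisj (by simp) (by simp) hij, fun i v => ?_⟩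
  have := hdev i (Finset.mem_univ i) v
  have : 0 ≤ ((2 : ℝ) ^ m i)⁻¹ := by positivity
  linarith

/-- given positive integers `m₁,…,m_k` with `Σ 2^{-mᵢ} ≤ 1`, every
multigraph has pairwise edge-disjoint spanning subgraphs `G₁,…,G_k` where `Gᵢ`
is a `2^{-mᵢ}`-fraction: every degree is within 2 of the corresponding fraction
of the original degree. -/
theorem stmt6 (k : ℕ) (m : Fin k → ℕ) (hm : ∀ i, 0 < m i)
    (hsum : ∑ i, ((2 : ℝ) ^ (m i))⁻¹ ≤ 1)
    (V E : Type) [Fintype V] [Fintype E] (ends : E → Sym2 V) :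
    ∃ F : Fin k → Set E,
      (Pairwise fun i j => Disjoint (F i) (F j)) ∧
      ∀ i, ∀ v : V,
        |(mdeg ends (F i) v : ℝ) -
          ((2 : ℝ) ^ (m i))⁻¹ * (mdeg ends Set.univ v : ℝ)| ≤ 2 :=
  stmt6_general k m hsum V E ends
end

section
/- Let G be a hypergraph with hyperedges of size at most three, and let τ(G) be the multigraph obtained from G by replacing each hyperedge h of size three containing vertices u₁, u₂, u₃ by a new vertex v_h adjacent to u₁, u₂ and u₃ (with multiplicities). Then for every pair of original vertices u, v of G, the local edge-connectivity satisfies λ_G(u,v) = λ_{τ(G)}(u,v). -/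
open scoped Classical

/-- The local edge-connectivity `λ_H(x,y)`: the least size of a set of hyperedges
whose deletion separates `x` from `y`. -/
noncomputable def lamH {V E : Type} (edges : E → Multiset V) (x y : V) : ℕ :=
  sInf {n | ∃ D : Set E, Nat.card D = n ∧
    ¬ Relation.ReflTransGen (HAdj edges {e | e ∉ D}) x y}

/-- The multigraph `τ(G)`: each size-three hyperedge `h = {u₁,u₂,u₃}` is replaced
by a new vertex `v_h` joined to `u₁`, `u₂`, `u₃` (with multiplicities); hyperedges
of size at most two are kept. -/
noncomputable def tauEdges {V E : Type} (edges : E → Multiset V) :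
    ({e : E // (edges e).card ≤ 2} ⊕ {e : E // (edges e).card = 3} × Fin 3) →
      Multiset (V ⊕ {e : E // (edges e).card = 3})
  | Sum.inl e => (edges e.1).map Sum.inl
  | Sum.inr (e, i) =>
      {Sum.inr e,
        Sum.inl ((edges e.1).toList.get
          (Fin.cast (by rw [Multiset.length_toList, e.2]) i))}

/-!
A cut `D'` of `τ(G)` projects, each edge to the hyperedge it comes from, onto a cut of `G` of no
larger size: a path of `G` avoiding the projection lifts to `τ(G)`, a size-three hyperedge being
crossed through its new vertex `v_h`.

Conversely, let `D` separate `u` from `v` in `G` and let `S` be the set of vertices reachable from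
`u`; every hyperedge crossing `S` lies in `D`. Put each `v_h` on the side of `S` that contains at
least two of the three vertices of `h`. The edges of `τ(G)` crossing this partition project
injectively into the hyperedges crossing `S`: in a crossing hyperedge of size three only the one
vertex on the minority side is joined to `v_h` by a crossing edge.
-/

theorem Nat.sInf_eq_sInf_of_forall_exists_le {s t : Set ℕ} (hs : ∀ m ∈ s, ∃ n ∈ t, n ≤ m)
    (ht : ∀ n ∈ t, ∃ m ∈ s, m ≤ n) : sInf s = sInf t := by
  have key : ∀ {s t : Set ℕ}, (∀ n ∈ t, ∃ m ∈ s, m ≤ n) → t.Nonempty → sInf s ≤ sInf t :=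
    fun h hne ↦ let ⟨_, hm, hle⟩ := h _ (Nat.sInf_mem hne); (Nat.sInf_le hm).trans hle
  by_cases hne : t.Nonempty
  · have hne' : s.Nonempty := let ⟨_, hn⟩ := hne; let ⟨m, hm, _⟩ := ht _ hn; ⟨m, hm⟩
    exact le_antisymm (key ht hne) (key hs hne')
  · have hs' : s = ∅ := Set.eq_empty_of_forall_notMem fun m hm ↦
      let ⟨n, hn, _⟩ := hs m hm; hne ⟨n, hn⟩
    rw [hs', Set.not_nonempty_iff_eq_empty.1 hne]

namespace Hypergraph

open Relation

variable {V E : Type}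

def IsCut (edges : E → Multiset V) (D : Set E) (x y : V) : Prop :=
  ¬ ReflTransGen (HAdj edges {e | e ∉ D}) x y

theorem lamH_eq_of_forall_isCut {V' E' : Type} {edges : E → Multiset V}
    {edges' : E' → Multiset V'} {x y : V} {x' y' : V'}
    (h : ∀ D, IsCut edges D x y → ∃ D', IsCut edges' D' x' y' ∧ D'.ncard ≤ D.ncard)
    (h' : ∀ D', IsCut edges' D' x' y' → ∃ D, IsCut edges D x y ∧ D.ncard ≤ D'.ncard) :
    lamH edges x y = lamH edges' x' y' := by
  unfold lamH
  simp only [Nat.card_coe_set_eq]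
  apply Nat.sInf_eq_sInf_of_forall_exists_le
  · rintro _ ⟨D, rfl, hD⟩
    obtain ⟨D', hD', hle⟩ := h D hD
    exact ⟨_, ⟨D', rfl, hD'⟩, hle⟩
  · rintro _ ⟨D', rfl, hD'⟩
    obtain ⟨D, hD, hle⟩ := h' D' hD'
    exact ⟨_, ⟨D, rfl, hD⟩, hle⟩

def edgeBoundary (edges : E → Multiset V) (A : Set V) : Set E :=
  {e | (∃ a ∈ edges e, a ∈ A) ∧ ∃ b ∈ edges e, b ∉ A}

theorem isCut_edgeBoundary (edges : E → Multiset V) {A : Set V} {x y : V} (hx : x ∈ A)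
    (hy : y ∉ A) : IsCut edges (edgeBoundary edges A) x y := by
  intro hxy
  refine hy (ReflTransGen.rec (motive := fun z _ ↦ z ∈ A) hx ?_ hxy)
  rintro a b - ⟨e, he, ha, hb⟩ haA
  by_contra hbA
  exact he ⟨⟨a, ha, haA⟩, b, hb, hbA⟩

theorem edgeBoundary_reachable_subset (edges : E → Multiset V) (D : Set E) (x : V) :
    edgeBoundary edges {z | ReflTransGen (HAdj edges {e | e ∉ D}) x z} ⊆ D := by
  rintro e ⟨⟨a, ha, hxa⟩, b, hb, hxb⟩
  by_contra he
  exact hxb (hxa.tail ⟨e, he, ha, hb⟩)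

theorem mem_edgeBoundary_iff_of_eq_pair {edges : E → Multiset V} {A : Set V} {e : E} {a b : V}
    (he : edges e = {a, b}) : e ∈ edgeBoundary edges A ↔ (a ∈ A ↔ b ∉ A) := by
  simp only [edgeBoundary, Set.mem_ofPred_eq, he, Multiset.insert_eq_cons, Multiset.mem_cons,
    Multiset.mem_singleton, exists_eq_or_imp, exists_eq_left]
  by_cases ha : a ∈ A <;> by_cases hb : b ∈ A <;> simp [ha, hb]

variable (edges : E → Multiset V)

def tauProj : ({e : E // (edges e).card ≤ 2} ⊕ {e : E // (edges e).card = 3} × Fin 3) → E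
  | Sum.inl e => e.1
  | Sum.inr (e, _) => e.1

/-- The vertex of a size-three hyperedge `e` that `τ(G)` joins to `v_e` by its `i`-th edge. -/
noncomputable def tauVertex (e : {e : E // (edges e).card = 3}) (i : Fin 3) : V :=
  (edges e.1).toList.get (Fin.cast (by rw [Multiset.length_toList, e.2]) i)

def majoritySide (A : Set V) : Set (V ⊕ {e : E // (edges e).card = 3}) :=
  {x | Sum.elim (· ∈ A) (fun e ↦ 2 ≤ (edges e.1).countP (· ∈ A)) x}

variable {edges}

theorem tauEdges_inr (e : {e : E // (edges e).card = 3}) (i : Fin 3) :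
    tauEdges edges (Sum.inr (e, i)) = {Sum.inr e, Sum.inl (tauVertex edges e i)} :=
  rfl

theorem tauVertex_mem (e : {e : E // (edges e).card = 3}) (i : Fin 3) :
    tauVertex edges e i ∈ edges e.1 := by
  rw [← Multiset.mem_toList]
  exact List.get_mem _ _

theorem exists_tauVertex_eq (e : {e : E // (edges e).card = 3}) {x : V} (hx : x ∈ edges e.1) :
    ∃ i, tauVertex edges e i = x := by
  obtain ⟨n, rfl⟩ := List.mem_iff_get.1 (Multiset.mem_toList.2 hx)
  have hlen : (edges e.1).toList.length = 3 := by rw [Multiset.length_toList, e.2]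
  exact ⟨Fin.cast hlen n, rfl⟩

theorem two_le_countP_of_tauVertex (e : {e : E // (edges e).card = 3}) (P : V → Prop)
    [DecidablePred P] {i j : Fin 3} (hij : i ≠ j) (hi : P (tauVertex edges e i)) (hj : P (tauVertex edges e j)) :
    2 ≤ (edges e.1).countP P := by
  have hlen : (edges e.1).toList.length = 3 := by rw [Multiset.length_toList, e.2]
  obtain ⟨a, b, c, habc⟩ := List.length_eq_three.1 hlen
  have hv : ∀ k, tauVertex edges e k = [a, b, c].get (Fin.cast (by simp) k) := fun k ↦
    List.getElem_of_eq habc _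
  rw [← Multiset.coe_toList (edges e.1), habc, Multiset.coe_countP]
  rw [hv] at hi hj
  fin_cases i <;> fin_cases j <;> simp_all [List.countP_cons]

theorem mem_majoritySide_inr_iff (e : {e : E // (edges e).card = 3}) {A : Set V}
    (he : e.1 ∉ edgeBoundary edges A) {a : V} (ha : a ∈ edges e.1) :
    Sum.inr e ∈ majoritySide edges A ↔ a ∈ A := by
  change 2 ≤ _ ↔ _
  by_cases haA : a ∈ A
  · have hall : ∀ b ∈ edges e.1, b ∈ A := fun b hb ↦ by
      by_contra hbA
      exact he ⟨⟨a, ha, haA⟩, b, hb, hbA⟩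
    simp [haA, Multiset.countP_eq_card.2 hall, e.2]
  · have hnone : ∀ b ∈ edges e.1, b ∉ A := fun b hb hbA ↦ he ⟨⟨b, hb, hbA⟩, a, ha, haA⟩
    simp [haA, Multiset.countP_eq_zero.2 hnone]

theorem tauProj_mem_edgeBoundary {A : Set V} {t}
    (ht : t ∈ edgeBoundary (tauEdges edges) (majoritySide edges A)) :
    tauProj edges t ∈ edgeBoundary edges A := by
  match t, ht with
  | Sum.inl e, ⟨⟨_, hx, hxA⟩, _, hy, hyA⟩ =>
    obtain ⟨a, ha, rfl⟩ := Multiset.mem_map.1 hx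
    obtain ⟨b, hb, rfl⟩ := Multiset.mem_map.1 hy
    exact ⟨⟨a, ha, hxA⟩, b, hb, hyA⟩
  | Sum.inr (e, i), ht =>
    by_contra he
    rw [mem_edgeBoundary_iff_of_eq_pair (tauEdges_inr e i),
      mem_majoritySide_inr_iff e he (tauVertex_mem e i)] at ht
    exact iff_not_self ht

theorem injOn_tauProj_edgeBoundary (A : Set V) :
    Set.InjOn (tauProj edges) (edgeBoundary (tauEdges edges) (majoritySide edges A)) := by
  rintro (⟨e, he⟩ | ⟨⟨e, he⟩, i⟩) ht (⟨e', he'⟩ | ⟨⟨e', he'⟩, j⟩) ht' (rfl : e = e')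
  · rfl
  · omega
  · omega
  rw [mem_edgeBoundary_iff_of_eq_pair (tauEdges_inr _ i)] at ht
  rw [mem_edgeBoundary_iff_of_eq_pair (tauEdges_inr _ j)] at ht'
  by_contra hij
  replace hij : i ≠ j := fun h ↦ hij (by rw [h])
  have hsplit := Multiset.card_eq_countP_add_countP (· ∈ A) (edges e)
  by_cases hmaj : Sum.inr ⟨e, he⟩ ∈ majoritySide edges A
  · have : 2 ≤ (edges e).countP (· ∉ A) :=
      two_le_countP_of_tauVertex ⟨e, he⟩ _ hij (ht.1 hmaj) (ht'.1 hmaj)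
    have : 2 ≤ (edges e).countP (· ∈ A) := hmaj
    omega
  · exact hmaj (two_le_countP_of_tauVertex ⟨e, he⟩ (· ∈ A) hij
      (of_not_not (mt ht.2 hmaj)) (of_not_not (mt ht'.2 hmaj)))

theorem exists_isCut_tauEdges [Finite E] {D : Set E} {x y : V} (hD : IsCut edges D x y) :
    ∃ D', IsCut (tauEdges edges) D' (Sum.inl x) (Sum.inl y) ∧ D'.ncard ≤ D.ncard := by
  set S := {z | ReflTransGen (HAdj edges {e | e ∉ D}) x z}
  refine ⟨edgeBoundary (tauEdges edges) (majoritySide edges S),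
    isCut_edgeBoundary _ ReflTransGen.refl hD, ?_⟩
  calc _ ≤ (edgeBoundary edges S).ncard :=
        Set.ncard_le_ncard_of_injOn _ (fun _ ↦ tauProj_mem_edgeBoundary)
          (injOn_tauProj_edgeBoundary S)
    _ ≤ D.ncard := Set.ncard_le_ncard (edgeBoundary_reachable_subset edges D x)

theorem reflTransGen_tauEdges_of_hAdj (hsize : ∀ e, (edges e).card ≤ 3)
    {D' : Set ({e : E // (edges e).card ≤ 2} ⊕ {e : E // (edges e).card = 3} × Fin 3)}
    {a b : V} (hab : HAdj edges {e | e ∉ tauProj edges '' D'} a b) :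
    ReflTransGen (HAdj (tauEdges edges) {t | t ∉ D'}) (Sum.inl a) (Sum.inl b) := by
  obtain ⟨e, he, ha, hb⟩ := hab
  have hlift : ∀ t, tauProj edges t = e → t ∉ D' := fun t ht htD ↦ he ⟨t, htD, ht⟩
  by_cases h2 : (edges e).card ≤ 2
  · exact .single ⟨Sum.inl ⟨e, h2⟩, hlift _ rfl, Multiset.mem_map_of_mem _ ha,
      Multiset.mem_map_of_mem _ hb⟩
  · have h3 : (edges e).card = 3 := by have := hsize e; omega
    obtain ⟨i, rfl⟩ := exists_tauVertex_eq ⟨e, h3⟩ ha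
    obtain ⟨j, rfl⟩ := exists_tauVertex_eq ⟨e, h3⟩ hb
    refine .tail (b := Sum.inr ⟨e, h3⟩) (.single ⟨Sum.inr (⟨e, h3⟩, i), hlift _ rfl, ?_, ?_⟩)
      ⟨Sum.inr (⟨e, h3⟩, j), hlift _ rfl, ?_, ?_⟩ <;> simp [tauEdges_inr]

theorem IsCut.of_tauEdges (hsize : ∀ e, (edges e).card ≤ 3)
    {D' : Set ({e : E // (edges e).card ≤ 2} ⊕ {e : E // (edges e).card = 3} × Fin 3)}
    {x y : V} (hD' : IsCut (tauEdges edges) D' (Sum.inl x) (Sum.inl y)) :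
    IsCut edges (tauProj edges '' D') x y :=
  fun hxy ↦ hD' (hxy.lift' Sum.inl fun _ _ ↦ reflTransGen_tauEdges_of_hAdj hsize)

end Hypergraph

theorem stmt9_general (V E : Type) [Fintype E] (edges : E → Multiset V)
    (hsize : ∀ e, (edges e).card ≤ 3) :
    ∀ u v : V,
      lamH edges u v = lamH (tauEdges edges) (Sum.inl u) (Sum.inl v) :=
  fun _ _ ↦ Hypergraph.lamH_eq_of_forall_isCut (fun _ ↦ Hypergraph.exists_isCut_tauEdges)
    fun _ hD' ↦ ⟨_, hD'.of_tauEdges hsize, Set.ncard_image_le⟩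

/-- for every hypergraph `G` with hyperedges of size at most three and
every pair of original vertices `u, v`, the local edge-connectivity in `G` equals
that in the multigraph `τ(G)`. -/
theorem stmt9 (V E : Type) [Fintype V] [Fintype E] (edges : E → Multiset V)
    (hne : ∀ e, edges e ≠ 0) (hsize : ∀ e, (edges e).card ≤ 3) :
    ∀ u v : V,
      lamH edges u v = lamH (tauEdges edges) (Sum.inl u) (Sum.inl v) :=
  stmt9_general V E edges hsize
end

section
/- Let G be a 2k-edge-connected multigraph without loops on at least two vertices, and let (A,B) be a maximum cut of G (a bipartition maximizing the number of crossing edges). Then the bipartite multigraph G' obtained from G by deleting all edges with both endpoints in A or both in B is k-edge-connected, and deg_{G'}(v) ≥ deg_G(v)/2 for every vertex v. -/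
open scoped Classical

/-- The whole multigraph is connected when restricted to the edges in `F`. -/
def MGConn {V E : Type} (ends : E → Sym2 V) (F : Set E) : Prop :=
  ∀ u v : V, Relation.ReflTransGen (MGAdj ends F) u v

/-- The spanning subgraph with edge set `F` is `k`-edge-connected. -/
def MGEdgeConnSub {V E : Type} (ends : E → Sym2 V) (F : Set E) (k : ℕ) : Prop :=
  ∀ D : Set E, Nat.card D < k → MGConn ends (F \ D)

/-- `e` crosses the cut `(A, Aᶜ)`. -/
def crosses {V E : Type} (ends : E → Sym2 V) (A : Set V) (e : E) : Prop :=
  (∃ x ∈ ends e, x ∈ A) ∧ (∃ y ∈ ends e, y ∉ A)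

/-- The size of the cut `(A, Aᶜ)`. -/
noncomputable def cutSize {V E : Type} [Fintype E] (ends : E → Sym2 V)
    (A : Set V) : ℕ :=
  Nat.card {e : E // crosses ends A e}

/-- The degree of `v` in the spanning subgraph with edge set `F` (no loops here). -/
noncomputable def mdegF {V E : Type} [Fintype E] (ends : E → Sym2 V)
    (F : Set E) (v : V) : ℕ :=
  Nat.card {e : E // e ∈ F ∧ v ∈ ends e}

/-!
At least half of the edges leaving any vertex set `S` cross a maximum cut `(A, Aᶜ)`: otherwise
moving `S` to the other side, i.e. passing to the cut `A ∆ S`, would enlarge the cut. If fewer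
than `k` crossing edges `D` separate `u` from `v`, let `S` be the set of vertices reached from `u`
by crossing edges outside `D`. Every crossing edge leaving `S` lies in `D`, so fewer than `2k`
edges of `G` leave `S`, and they separate `u` from `v` in `G`. The degree bound is the case
`S = {v}`.
-/

open Finset

section Multigraph

variable {V E : Type} (ends : E → Sym2 V)

lemma crosses_iff_xor {A : Set V} {e : E} {x y : V} (h : ends e = s(x, y)) :
    crosses ends A e ↔ Xor (x ∈ A) (y ∈ A) := by
  simp only [crosses, h, Sym2.mem_iff, xor_iff_iff_not]
  grind

lemma crosses_symmDiff (A S : Set V) (e : E) :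
    crosses ends (symmDiff A S) e ↔ Xor (crosses ends A e) (crosses ends S e) := by
  obtain ⟨x, y, h⟩ : ∃ x y, ends e = s(x, y) := Sym2.exists.1 ⟨_, rfl⟩
  simp only [crosses_iff_xor ends h, Set.mem_symmDiff, xor_iff_iff_not]
  tauto

lemma mem_ends_iff_crosses_singleton {e : E} (he : ¬ (ends e).IsDiag) (v : V) :
    v ∈ ends e ↔ crosses ends {v} e := by
  obtain ⟨x, y, h⟩ : ∃ x y, ends e = s(x, y) := Sym2.exists.1 ⟨_, rfl⟩
  rw [h, Sym2.mk_isDiag_iff] at he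
  simp only [crosses_iff_xor ends h, h, Sym2.mem_iff, Set.mem_singleton_iff, xor_iff_iff_not]
  grind

lemma mem_of_reflTransGen_of_not_crosses {F : Set E} {S : Set V}
    (hS : ∀ e ∈ F, ¬ crosses ends S e) {u v : V}
    (huv : Relation.ReflTransGen (MGAdj ends F) u v) (hu : u ∈ S) : v ∈ S := by
  induction huv with
  | refl => exact hu
  | tail _ hwv ih =>
    obtain ⟨e, heF, he⟩ := hwv
    by_contra hv
    exact hS e heF ((crosses_iff_xor ends he).2 (Or.inl ⟨ih, hv⟩))

lemma not_crosses_reachable {F : Set E} (u : V) {e : E} (he : e ∈ F) :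
    ¬ crosses ends {w | Relation.ReflTransGen (MGAdj ends F) u w} e := by
  obtain ⟨x, y, h⟩ : ∃ x y, ends e = s(x, y) := Sym2.exists.1 ⟨_, rfl⟩
  rw [crosses_iff_xor ends h]
  rintro (⟨hx, hy⟩ | ⟨hy, hx⟩)
  · exact hy (hx.tail ⟨e, he, h⟩)
  · exact hx (hy.tail ⟨e, he, h.trans Sym2.eq_swap⟩)

variable [Fintype E]

/-- Edge by edge, `[e ∈ δS] + [e ∈ δA] = 2 [e ∈ δA ∩ δS] + [e ∈ δ(A ∆ S)]`. -/
lemma card_crosses_le_two_mul_of_isMaxCut {A : Set V}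
    (hmax : ∀ A' : Set V, cutSize ends A' ≤ cutSize ends A) (S : Set V) :
    Nat.card {e // crosses ends S e} ≤
      2 * Nat.card {e // crosses ends A e ∧ crosses ends S e} := by
  have key : Nat.card {e // crosses ends S e} + cutSize ends A =
      2 * Nat.card {e // crosses ends A e ∧ crosses ends S e} + cutSize ends (symmDiff A S) := by
    simp only [cutSize, Nat.card_eq_fintype_card, Fintype.card_subtype, card_filter,
      mul_sum, ← sum_add_distrib]
    refine sum_congr rfl fun e _ => ?_
    rw [crosses_symmDiff]
    by_cases hA : crosses ends A e <;> by_cases hS : crosses ends S e <;> simp [hA, hS]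
  have := hmax (symmDiff A S)
  omega

end Multigraph

theorem stmt11_general (k : ℕ) (V E : Type) [Fintype E] (ends : E → Sym2 V)
    (hloop : ∀ e, ¬ (ends e).IsDiag)
    (hconn : MGEdgeConnSub ends Set.univ (2 * k))
    (A : Set V) (hmax : ∀ A' : Set V, cutSize ends A' ≤ cutSize ends A) :
    MGEdgeConnSub ends {e | crosses ends A e} k ∧
      ∀ v : V, mdegF ends Set.univ v ≤ 2 * mdegF ends {e | crosses ends A e} v := by
  constructor
  · intro D hD u v
    set S := {w | Relation.ReflTransGen (MGAdj ends ({e | crosses ends A e} \ D)) u w}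
    have hbdry : {e | crosses ends A e ∧ crosses ends S e} ⊆ D := by
      rintro e ⟨heA, heS⟩
      by_contra heD
      exact not_crosses_reachable ends u (F := {e | crosses ends A e} \ D) ⟨heA, heD⟩ heS
    have hsmall : Nat.card {e // crosses ends S e} < 2 * k :=
      calc Nat.card {e // crosses ends S e}
          ≤ 2 * Nat.card {e // crosses ends A e ∧ crosses ends S e} :=
            card_crosses_le_two_mul_of_isMaxCut ends hmax S
        _ ≤ 2 * Nat.card D := Nat.mul_le_mul_left 2 (Nat.card_mono (Set.toFinite D) hbdry)
        _ < 2 * k := by omega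
    exact mem_of_reflTransGen_of_not_crosses ends (fun e he => he.2)
      (hconn {e | crosses ends S e} hsmall u v) Relation.ReflTransGen.refl
  · intro v
    have hdeg : ∀ F : Set E, mdegF ends F v = Nat.card {e // e ∈ F ∧ crosses ends {v} e} :=
      fun F => Nat.card_congr <| Equiv.subtypeEquivRight fun e => by
        rw [mem_ends_iff_crosses_singleton ends (hloop e)]
    simpa only [hdeg, Set.mem_univ, true_and, Set.mem_ofPred_eq] using
      card_crosses_le_two_mul_of_isMaxCut ends hmax {v}

/-- if `G` is a loopless `2k`-edge-connected multigraph on at least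
two vertices and `(A, Aᶜ)` is a maximum cut, then the bipartite multigraph `G'`
consisting of the crossing edges is `k`-edge-connected and
`deg_{G'}(v) ≥ deg_G(v)/2` for every vertex. -/
theorem stmt11 (k : ℕ) (V E : Type) [Fintype V] [Fintype E] (ends : E → Sym2 V)
    (hV : 2 ≤ Fintype.card V)
    (hloop : ∀ e, ¬ (ends e).IsDiag)
    (hconn : MGEdgeConnSub ends Set.univ (2 * k))
    (A : Set V) (hmax : ∀ A' : Set V, cutSize ends A' ≤ cutSize ends A) :
    MGEdgeConnSub ends {e | crosses ends A e} k ∧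
      ∀ v : V, mdegF ends Set.univ v ≤ 2 * mdegF ends {e | crosses ends A e} v :=
  stmt11_general k V E ends hloop hconn A hmax
end

section
/- Let A = {A₁,…,A_n} be events in a probability space, and for each A ∈ A let Γ(A) ⊆ A be such that A is independent of the collection A ∖ ({A} ∪ Γ(A)). If there is an assignment x : A → (0,1) with Pr(A) ≤ x(A)·Π_{B∈Γ(A)}(1−x(B)) for every A ∈ A, then Pr(⋀_{A∈A} ¬A) ≥ Π_{A∈A}(1−x(A)) > 0. -/
/-!
Write `P(T)` for the probability that none of the events `A j`, `j ∈ T`, occurs. The heart of the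
proof is the bound `Pr(A i ∩ ⋂_{j ∈ S} (A j)ᶜ) ≤ x i · P(S)`, i.e. `Pr(A i | no event of S) ≤ x i`
with the denominator cleared, proved by strong induction on `S`. Independence gives
`Pr(A i ∩ ⋂_{j ∈ S} (A j)ᶜ) ≤ Pr(A i) · P(S \ Γ i)`, and adding the events of `S ∩ Γ i` back one
at a time, each step costing at most a factor `1 - x j` by the inductive hypothesis, gives
`P(S) ≥ ∏_{j ∈ S ∩ Γ i} (1 - x j) · P(S \ Γ i)`. The same peeling over all events yields
`P(univ) ≥ ∏ i, (1 - x i)`.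
-/

open MeasureTheory Finset

section LocalLemma

variable {ι Ω : Type*} [MeasurableSpace Ω] {μ : Measure Ω} [IsFiniteMeasure μ]
  {A : ι → Set Ω} {x : ι → ℝ} [DecidableEq ι]

theorem measureReal_biInter_compl_insert {k : ι} (hA : MeasurableSet (A k)) (T : Finset ι) :
    μ.real (⋂ j ∈ insert k T, (A j)ᶜ) =
      μ.real (⋂ j ∈ T, (A j)ᶜ) - μ.real (A k ∩ ⋂ j ∈ T, (A j)ᶜ) := by
  rw [set_biInter_insert, ← measureReal_inter_add_sdiff (s := ⋂ j ∈ T, (A j)ᶜ) hA, Set.sdiff_eq,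
    Set.inter_comm (A k), Set.inter_comm (A k)ᶜ]
  ring

theorem one_sub_mul_le_measureReal_biInter_compl_insert {k : ι} (hA : MeasurableSet (A k))
    {T : Finset ι} (hk : μ.real (A k ∩ ⋂ j ∈ T, (A j)ᶜ) ≤ x k * μ.real (⋂ j ∈ T, (A j)ᶜ)) :
    (1 - x k) * μ.real (⋂ j ∈ T, (A j)ᶜ) ≤ μ.real (⋂ j ∈ insert k T, (A j)ᶜ) := by
  rw [measureReal_biInter_compl_insert hA]
  linarith

theorem prod_one_sub_mul_le_measureReal_biInter_compl (hA : ∀ i, MeasurableSet (A i))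
    (hx : ∀ i, x i ∈ Set.Icc (0 : ℝ) 1) {S₁ S₂ : Finset ι} (hS : Disjoint S₁ S₂)
    (hcond : ∀ T ⊂ S₁ ∪ S₂, ∀ i,
      μ.real (A i ∩ ⋂ j ∈ T, (A j)ᶜ) ≤ x i * μ.real (⋂ j ∈ T, (A j)ᶜ)) :
    (∏ j ∈ S₁, (1 - x j)) * μ.real (⋂ j ∈ S₂, (A j)ᶜ) ≤ μ.real (⋂ j ∈ S₁ ∪ S₂, (A j)ᶜ) := by
  induction S₁ using Finset.induction_on with
  | empty => simp
  | @insert k S₁ hkS₁ ih =>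
    obtain ⟨hkS₂, hS⟩ := disjoint_insert_left.1 hS
    have hk : k ∉ S₁ ∪ S₂ := by simp [hkS₁, hkS₂]
    rw [insert_union] at hcond ⊢
    have ih := ih hS fun T hT => hcond T (hT.trans_subset (subset_insert k _))
    calc (∏ j ∈ insert k S₁, (1 - x j)) * μ.real (⋂ j ∈ S₂, (A j)ᶜ)
        = (1 - x k) * ((∏ j ∈ S₁, (1 - x j)) * μ.real (⋂ j ∈ S₂, (A j)ᶜ)) := by
          rw [prod_insert hkS₁, mul_assoc]
      _ ≤ (1 - x k) * μ.real (⋂ j ∈ S₁ ∪ S₂, (A j)ᶜ) := by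
          gcongr
          exact sub_nonneg.2 (hx k).2
      _ ≤ μ.real (⋂ j ∈ insert k (S₁ ∪ S₂), (A j)ᶜ) :=
          one_sub_mul_le_measureReal_biInter_compl_insert (hA k) (hcond _ (ssubset_insert hk) k)

theorem measureReal_inter_biInter_compl_le (hA : ∀ i, MeasurableSet (A i)) (Γ : ι → Finset ι)
    (hindep : ∀ i (S : Finset ι), (∀ j ∈ S, j ≠ i ∧ j ∉ Γ i) →
      μ.real (A i ∩ ⋂ j ∈ S, (A j)ᶜ) = μ.real (A i) * μ.real (⋂ j ∈ S, (A j)ᶜ))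
    (hx : ∀ i, x i ∈ Set.Icc (0 : ℝ) 1)
    (hbound : ∀ i, μ.real (A i) ≤ x i * ∏ j ∈ Γ i, (1 - x j)) (S : Finset ι) (i : ι) :
    μ.real (A i ∩ ⋂ j ∈ S, (A j)ᶜ) ≤ x i * μ.real (⋂ j ∈ S, (A j)ᶜ) := by
  induction S using Finset.strongInduction generalizing i with
  | H S ih =>
    by_cases hiS : i ∈ S
    · have hempty : A i ∩ ⋂ j ∈ S, (A j)ᶜ = ∅ :=
        Set.eq_empty_of_forall_notMem fun ω hω => Set.mem_iInter₂.1 hω.2 i hiS hω.1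
      rw [hempty, measureReal_empty]
      exact mul_nonneg (hx i).1 measureReal_nonneg
    have hsplit : S ∩ Γ i ∪ S \ Γ i = S := by rw [union_comm, sdiff_union_inter]
    have hfar : ∀ j ∈ S \ Γ i, j ≠ i ∧ j ∉ Γ i := fun j hj =>
      ⟨fun hji => hiS (hji ▸ (mem_sdiff.1 hj).1), (mem_sdiff.1 hj).2⟩
    have hpeel := prod_one_sub_mul_le_measureReal_biInter_compl hA hx
      (disjoint_sdiff.mono_left inter_subset_right) (hsplit ▸ ih)
    rw [hsplit] at hpeel
    have hΓ : ∏ j ∈ Γ i, (1 - x j) ≤ ∏ j ∈ S ∩ Γ i, (1 - x j) :=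
      prod_le_prod_of_subset_of_le_one inter_subset_right (fun j _ => sub_nonneg.2 (hx j).2)
        fun j _ _ => sub_le_self _ (hx j).1
    calc μ.real (A i ∩ ⋂ j ∈ S, (A j)ᶜ)
        ≤ μ.real (A i ∩ ⋂ j ∈ S \ Γ i, (A j)ᶜ) := measureReal_mono (by
          gcongr; exact Set.iInter_mono' fun hj => ⟨(mem_sdiff.1 hj).1, subset_rfl⟩)
      _ = μ.real (A i) * μ.real (⋂ j ∈ S \ Γ i, (A j)ᶜ) := hindep i _ hfar
      _ ≤ x i * (∏ j ∈ Γ i, (1 - x j)) * μ.real (⋂ j ∈ S \ Γ i, (A j)ᶜ) := by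
          gcongr; exact hbound i
      _ ≤ x i * (∏ j ∈ S ∩ Γ i, (1 - x j)) * μ.real (⋂ j ∈ S \ Γ i, (A j)ᶜ) :=
          mul_le_mul_of_nonneg_right (mul_le_mul_of_nonneg_left hΓ (hx i).1) measureReal_nonneg
      _ ≤ x i * μ.real (⋂ j ∈ S, (A j)ᶜ) := by
          rw [mul_assoc]
          exact mul_le_mul_of_nonneg_left hpeel (hx i).1

end LocalLemma

theorem stmt16_general (n : ℕ) (Ω : Type) [MeasurableSpace Ω] (μ : Measure Ω)
    [IsProbabilityMeasure μ]
    (A : Fin n → Set Ω) (hA : ∀ i, MeasurableSet (A i))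
    (Γ : Fin n → Finset (Fin n))
    (hindep : ∀ i : Fin n, ∀ S : Finset (Fin n),
      (∀ j ∈ S, j ≠ i ∧ j ∉ Γ i) → ∀ f : Fin n → Bool,
        μ (A i ∩ ⋂ j ∈ S, (if f j then A j else (A j)ᶜ)) =
          μ (A i) * μ (⋂ j ∈ S, (if f j then A j else (A j)ᶜ)))
    (x : Fin n → ℝ) (hx : ∀ i, x i ∈ Set.Ioo (0 : ℝ) 1)
    (hbound : ∀ i, (μ (A i)).toReal ≤ x i * ∏ j ∈ Γ i, (1 - x j)) :
    ENNReal.ofReal (∏ i, (1 - x i)) ≤ μ (⋂ i, (A i)ᶜ) ∧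
      0 < μ (⋂ i, (A i)ᶜ) := by
  have hx' : ∀ i, x i ∈ Set.Icc (0 : ℝ) 1 := fun i => Set.Ioo_subset_Icc_self (hx i)
  have hcond := measureReal_inter_biInter_compl_le hA Γ
    (fun i S hS => by
      simpa [measureReal_def] using congrArg ENNReal.toReal (hindep i S hS fun _ => false))
    hx' hbound
  have hprod : ∏ i, (1 - x i) ≤ μ.real (⋂ i, (A i)ᶜ) := by
    simpa using prod_one_sub_mul_le_measureReal_biInter_compl hA hx'
      (disjoint_empty_right univ) fun T _ => hcond T
  have hpos : 0 < ∏ i, (1 - x i) := prod_pos fun i _ => sub_pos.2 (hx i).2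
  exact ⟨ENNReal.ofReal_le_of_le_toReal hprod,
    (ENNReal.toReal_pos_iff.1 (hpos.trans_le hprod)).1⟩

/-- asymmetric Lovász Local Lemma: if each event `A i` is mutually
independent of all events outside `{i} ∪ Γ i`, and there are reals
`x i ∈ (0,1)` with `Pr(A i) ≤ x i · Π_{j ∈ Γ i} (1 - x j)`, then the probability
that none of the events occurs is at least `Π i (1 - x i) > 0`. -/
theorem stmt16 (n : ℕ) (Ω : Type) [MeasurableSpace Ω] (μ : Measure Ω)
    [IsProbabilityMeasure μ]
    (A : Fin n → Set Ω) (hA : ∀ i, MeasurableSet (A i))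
    (Γ : Fin n → Finset (Fin n)) (hΓ : ∀ i, i ∉ Γ i)
    (hindep : ∀ i : Fin n, ∀ S : Finset (Fin n),
      (∀ j ∈ S, j ≠ i ∧ j ∉ Γ i) → ∀ f : Fin n → Bool,
        μ (A i ∩ ⋂ j ∈ S, (if f j then A j else (A j)ᶜ)) =
          μ (A i) * μ (⋂ j ∈ S, (if f j then A j else (A j)ᶜ)))
    (x : Fin n → ℝ) (hx : ∀ i, x i ∈ Set.Ioo (0 : ℝ) 1)
    (hbound : ∀ i, (μ (A i)).toReal ≤ x i * ∏ j ∈ Γ i, (1 - x j)) :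
    ENNReal.ofReal (∏ i, (1 - x i)) ≤ μ (⋂ i, (A i)ᶜ) ∧
      0 < μ (⋂ i, (A i)ᶜ) :=
  stmt16_general n Ω μ A hA Γ hindep x hx hbound
end
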